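/- arXiv:1907.02758 — 6 statements merged into one kernel-verified Lean document; each statement's English description precedes it below -/
import Mathlib

section
/- Let s ≥ 1, D = ∏_{j=1}^s [a_j, b_j] with a_j < b_j, μ a Borel probability measure on ℝ^s, N ≥ 2 an integer and g ∈ {1,…,N−1}^s. Let f : ℝ^s → ℝ be measurable with ∑_{k ∈ ℕ^s} 2^{|k|_0/2} |f̃_cos(k)| < ∞, and assume ∑_{k ∈ ℤ^s} |m_μ(k)| < ∞. Let p_{φ,n} = φ({n g / N}) × (b−a) + a denote the tent-transformed lattice points and L⊥ = {h ∈ ℤ^s : h·g ≡ 0 (mod N)} the dual lattice. Then (1/N) ∑_{n=0}^{N−1} f̄(p_{φ,n}) · ( ∑_{k ∈ ℤ^s} m_μ(k) e^{2πi n (k·g)/N} ) − ∫_{ℝ^s} f̄ dμ = ∑_{h ∈ L⊥\{0}} ∑_{k ∈ ℤ^s} (√2)^{−|h−k|_0} f̃_cos(h−k) m_μ(k), where f̄ is the half-period cosine expansion of f and both double series converge absolutely. (The left-hand side is the tent-transformed lattice-rule quadrature of f̄ against the reproducing kernel, minus the true integral of f̄.) -/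
set_option maxHeartbeats 1000000


open MeasureTheory Real Finset

noncomputable section

/-- `|k|₀`: the number of nonzero components of `k ∈ ℤ^s`. -/
def zcount {s : ℕ} (k : Fin s → ℤ) : ℕ := (Finset.univ.filter fun j => k j ≠ 0).card

/-- One-dimensional weight `r_{α,γ}(k)`. -/
def rone (α γ : ℝ) (k : ℤ) : ℝ := if k = 0 then 1 else γ * |(k : ℝ)| ^ (-(2 * α))

/-- Multidimensional weight `r_{α,γ,s}(k) = ∏_j r_{α,γ_j}(k_j)`. -/
def rmulti {s : ℕ} (α : ℝ) (γ : Fin s → ℝ) (k : Fin s → ℤ) : ℝ := ∏ j, rone α (γ j) (k j)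

/-- Cosine coefficients of `f` on the box `D = ∏_j [a_j, b_j]`:
`f̃_cos(k) = 2^{|k|₀/2} ∫_{[0,1]^s} f(y × (b−a) + a) ∏_j cos(π k_j y_j) dy`. -/
def cosCoef {s : ℕ} (a b : Fin s → ℝ) (f : (Fin s → ℝ) → ℝ) (k : Fin s → ℤ) : ℝ :=
  Real.sqrt 2 ^ zcount k *
    ∫ y in Set.Icc (0 : Fin s → ℝ) 1,
      f (fun j => y j * (b j - a j) + a j) * ∏ j, Real.cos (π * (k j : ℝ) * y j)

/-- The cosine transform of a measure `μ`:
`m_μ(k) = ∫ ∏_j cos(π k_j (y_j − a_j)/(b_j − a_j)) μ(dy)`. -/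
def cosTransform {s : ℕ} (a b : Fin s → ℝ) (μ : Measure (Fin s → ℝ)) (k : Fin s → ℤ) : ℝ :=
  ∫ y, ∏ j, Real.cos (π * (k j : ℝ) * (y j - a j) / (b j - a j)) ∂μ

/-- `ζ(t) = ∑_{n=1}^∞ n^{-t}`. -/
def zetaR (t : ℝ) : ℝ := ∑' n : ℕ, ((n : ℝ) + 1) ^ (-t)

/-- The half-period cosine expansion
`f̄(y) = ∑_{k ∈ ℕ^s} f̃_cos(k) (√2)^{|k|₀} ∏_j cos(π k_j (y_j − a_j)/(b_j − a_j))`. -/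
def fbar {s : ℕ} (a b : Fin s → ℝ) (f : (Fin s → ℝ) → ℝ) (y : Fin s → ℝ) : ℝ :=
  ∑' k : Fin s → ℕ,
    cosCoef a b f (fun j => (k j : ℤ)) * Real.sqrt 2 ^ zcount (fun j => ((k j : ℤ))) *
      ∏ j, Real.cos (π * (k j : ℝ) * (y j - a j) / (b j - a j))

/-- Tent-transformed lattice point `p_{φ,n} = φ({n g / N}) × (b − a) + a`. -/
def latPoint {s : ℕ} (a b : Fin s → ℝ) (N : ℕ) (g : Fin s → ℤ) (n : ℕ) : Fin s → ℝ :=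
  fun j => (1 - |2 * Int.fract ((n : ℝ) * (g j : ℝ) / (N : ℝ)) - 1|) * (b j - a j) + a j

/-- Modulated function `f_h(y) = f(y) ∏_j cos(π h_j (y_j − a_j)/(b_j − a_j))`. -/
def fmod {s : ℕ} (a b : Fin s → ℝ) (f : (Fin s → ℝ) → ℝ) (h : Fin s → ℤ)
    (y : Fin s → ℝ) : ℝ :=
  f y * ∏ j, Real.cos (π * (h j : ℝ) * (y j - a j) / (b j - a j))


namespace S1

lemma cos_pi_abs (r y : ℝ) : Real.cos (π * |r| * y) = Real.cos (π * r * y) := by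
  rcases abs_cases r with ⟨h, _⟩ | ⟨h, _⟩ <;> rw [h]
  rw [show π * -r * y = -(π * r * y) by ring, Real.cos_neg]

lemma cos_pi_abs_div (r w d : ℝ) : Real.cos (π * |r| * w / d) = Real.cos (π * r * w / d) := by
  rw [mul_div_assoc, mul_div_assoc, cos_pi_abs]

lemma natAbs_cast (k : ℤ) : (((k.natAbs : ℤ) : ℝ)) = |(k : ℝ)| := by
  push_cast [Nat.cast_natAbs]; rfl

lemma zcount_natAbs {s : ℕ} (k : Fin s → ℤ) :
    zcount (fun j => ((k j).natAbs : ℤ)) = zcount k := by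
  unfold zcount; congr 1; apply Finset.filter_congr; intro j _; simp

lemma tent_cos (k : ℤ) (x : ℝ) :
    Real.cos (π * k * (1 - |2 * Int.fract x - 1|)) = Real.cos (2 * π * k * x) := by
  have hsin : Real.sin (π * k) = 0 := by
    rw [show π * (k:ℝ) = (k:ℝ) * π by ring]; exact Real.sin_int_mul_pi k
  have h1 : Real.cos (π * k * (1 - |2 * Int.fract x - 1|))
      = Real.cos (π * k) * Real.cos (π * k * |2 * Int.fract x - 1|) := by
    rw [show π * k * (1 - |2 * Int.fract x - 1|)
        = π * k - π * k * |2 * Int.fract x - 1| by ring, Real.cos_sub, hsin]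
    ring
  have h2 : Real.cos (π * k * |2 * Int.fract x - 1|)
      = Real.cos (π * k * (2 * Int.fract x - 1)) := by
    rcases abs_cases (2 * Int.fract x - 1) with ⟨h, _⟩ | ⟨h, _⟩ <;> rw [h]
    rw [show π * k * -(2 * Int.fract x - 1) = -(π * k * (2 * Int.fract x - 1)) by ring,
      Real.cos_neg]
  have h3 : Real.cos (π * k) * Real.cos (π * k * (2 * Int.fract x - 1))
      = Real.cos (2 * π * k * Int.fract x) := by
    rw [show (2:ℝ) * π * k * Int.fract x = π * k + π * k * (2 * Int.fract x - 1) by ring,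
      Real.cos_add, hsin]
    ring
  rw [h1, h2, h3]
  have h4 : 2 * π * (k:ℝ) * x = 2 * π * k * Int.fract x + (k * ⌊x⌋ : ℤ) * (2 * π) := by
    have hx := Int.floor_add_fract x
    push_cast
    linear_combination (2 * π * (k:ℝ)) * hx.symm
  rw [h4, Real.cos_add_int_mul_two_pi]


def nA {s : ℕ} (k : Fin s → ℤ) : Fin s → ℕ := fun j => (k j).natAbs

instance fib1Fintype (c : ℕ) : Fintype {x : ℤ // x.natAbs = c} :=
  Fintype.subtype ({(c : ℤ), -(c : ℤ)} : Finset ℤ) (by intro x; simp; omega)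

def fibEquiv {s : ℕ} (m : Fin s → ℕ) :
    {k : Fin s → ℤ // nA k = m} ≃ (∀ j, {x : ℤ // x.natAbs = m j}) where
  toFun k j := ⟨k.1 j, congrFun k.2 j⟩
  invFun k := ⟨fun j => (k j).1, funext fun j => (k j).2⟩
  left_inv k := rfl
  right_inv k := rfl

instance fibFintype {s : ℕ} (m : Fin s → ℕ) : Fintype {k : Fin s → ℤ // nA k = m} :=
  Fintype.ofEquiv _ (fibEquiv m).symm

lemma sum_fib1 {α} [AddCommMonoid α] (c : ℕ) (F : ℤ → α) :
    ∑ x : {x : ℤ // x.natAbs = c}, F x.1 = if c = 0 then F 0 else F c + F (-(c : ℤ)) := by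
  rw [← Finset.sum_subtype ({(c : ℤ), -(c : ℤ)} : Finset ℤ) (by intro x; simp; omega) F]
  rcases eq_or_ne c 0 with rfl | hc
  · simp
  · rw [if_neg hc, Finset.sum_pair (by omega : (c : ℤ) ≠ -(c : ℤ))]

lemma sum_fiber_prod {α} [CommSemiring α] {s : ℕ} (m : Fin s → ℕ) (F : Fin s → ℤ → α) :
    ∑ k : {k : Fin s → ℤ // nA k = m}, ∏ j, F j (k.1 j)
      = ∏ j, (if m j = 0 then F j 0 else F j (m j) + F j (-(m j : ℤ))) := by
  have h1 : ∀ j, (if m j = 0 then F j 0 else F j (m j) + F j (-(m j : ℤ)))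
      = ∑ x : {x : ℤ // x.natAbs = m j}, F j x.1 := fun j => (sum_fib1 (m j) (F j)).symm
  simp_rw [h1]
  rw [Finset.prod_univ_sum (fun j => (Finset.univ : Finset {x : ℤ // x.natAbs = m j}))
    (fun j x => F j x.1), Fintype.piFinset_univ]
  exact (Equiv.sum_comp (fibEquiv m).symm _).symm

lemma prod_ite_two {α} [CommSemiring α] {s : ℕ} (m : Fin s → ℕ) :
    (∏ j, if m j = 0 then (1 : α) else 2) = 2 ^ zcount (fun j => (m j : ℤ)) := by
  have : zcount (fun j => (m j : ℤ)) = (Finset.univ.filter fun j => m j ≠ 0).card := by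
    unfold zcount; congr 1; apply Finset.filter_congr; intro j _; simp
  rw [this, ← Finset.prod_const, Finset.prod_filter]
  apply Finset.prod_congr rfl
  intro j _
  by_cases h : m j = 0 <;> simp [h]

lemma tsum_collapse {α} [AddCommGroup α] [UniformSpace α] [IsUniformAddGroup α]
    [CompleteSpace α] [T0Space α] {s : ℕ} (F : (Fin s → ℤ) → α) (hF : Summable F) :
    ∑' k, F k = ∑' m : Fin s → ℕ, ∑ k : {k : Fin s → ℤ // nA k = m}, F k.1 := by
  rw [← (Equiv.sigmaFiberEquiv (nA (s := s))).tsum_eq F]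
  rw [show (fun c => F ((Equiv.sigmaFiberEquiv (nA (s := s))) c))
      = fun c : (y : Fin s → ℕ) × {x // nA x = y} => F c.2.1 from rfl]
  rw [Summable.tsum_sigma (f := fun c : (y : Fin s → ℕ) × {x // nA x = y} => F c.2.1)
    (by exact ((Equiv.sigmaFiberEquiv (nA (s := s))).summable_iff).2 hF)]
  exact tsum_congr fun m => tsum_fintype _


lemma cosCoef_nA {s : ℕ} (a b : Fin s → ℝ) (f : (Fin s → ℝ) → ℝ) (k : Fin s → ℤ) :
    cosCoef a b f (fun j => ((k j).natAbs : ℤ)) = cosCoef a b f k := by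
  unfold cosCoef
  rw [zcount_natAbs]
  congr 1
  apply MeasureTheory.integral_congr_ae
  filter_upwards with y
  congr 1
  exact Finset.prod_congr rfl fun j _ => by rw [natAbs_cast (k j), cos_pi_abs]

lemma cosTransform_nA {s : ℕ} (a b : Fin s → ℝ) (μ : Measure (Fin s → ℝ)) (k : Fin s → ℤ) :
    cosTransform a b μ (fun j => ((k j).natAbs : ℤ)) = cosTransform a b μ k := by
  unfold cosTransform
  apply MeasureTheory.integral_congr_ae
  filter_upwards with y
  exact Finset.prod_congr rfl fun j _ => by rw [natAbs_cast (k j), cos_pi_abs_div]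

lemma nA_neg {s : ℕ} (k : Fin s → ℤ) : nA (-k) = nA k := by
  funext j; simp [nA]

lemma zcount_neg {s : ℕ} (k : Fin s → ℤ) : zcount (-k) = zcount k := by
  rw [← zcount_natAbs (-k), ← zcount_natAbs k]
  have : nA (-k) = nA k := nA_neg k
  unfold nA at this
  rw [show (fun j => (((-k) j).natAbs : ℤ)) = (fun j => (((k) j).natAbs : ℤ)) by
    funext j; simp]

lemma cosCoef_neg {s : ℕ} (a b : Fin s → ℝ) (f : (Fin s → ℝ) → ℝ) (k : Fin s → ℤ) :
    cosCoef a b f (-k) = cosCoef a b f k := by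
  rw [← cosCoef_nA a b f (-k), ← cosCoef_nA a b f k]
  congr 1
  funext j
  simp

/-- the `B` weight -/
def Bf {s : ℕ} (a b : Fin s → ℝ) (f : (Fin s → ℝ) → ℝ) (k : Fin s → ℤ) : ℝ :=
  Real.sqrt 2 ^ (-(zcount k : ℤ)) * cosCoef a b f k

lemma Bf_neg {s : ℕ} (a b : Fin s → ℝ) (f : (Fin s → ℝ) → ℝ) (k : Fin s → ℤ) :
    Bf a b f (-k) = Bf a b f k := by
  unfold Bf; rw [zcount_neg, cosCoef_neg]

lemma sqrt2_pos : (0 : ℝ) < Real.sqrt 2 := Real.sqrt_pos.2 two_pos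

lemma sqrt2_weight (z : ℕ) : Real.sqrt 2 ^ (-(z : ℤ)) * 2 ^ z = Real.sqrt 2 ^ z := by
  have h2 : (2 : ℝ) = Real.sqrt 2 * Real.sqrt 2 := (Real.mul_self_sqrt two_pos.le).symm
  rw [zpow_neg, zpow_natCast, h2, mul_pow]
  field_simp
  simp

lemma char_sum (N : ℕ) (hN : 2 ≤ N) (t : ℤ) :
    (∑ n ∈ Finset.range N,
      Complex.exp (2 * (π : ℂ) * Complex.I * (n : ℂ) * (t : ℂ) / (N : ℂ)))
      = if (N : ℤ) ∣ t then (N : ℂ) else 0 := by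
  have hN0 : (N : ℂ) ≠ 0 := Nat.cast_ne_zero.2 (by omega)
  have hexp : ∀ n ∈ Finset.range N,
      Complex.exp (2 * (π : ℂ) * Complex.I * (n : ℂ) * (t : ℂ) / (N : ℂ))
        = Complex.exp (2 * (π : ℂ) * Complex.I * (t : ℂ) / (N : ℂ)) ^ n := by
    intro n _
    rw [← Complex.exp_nat_mul]
    congr 1
    ring
  rw [Finset.sum_congr rfl hexp]
  by_cases hdvd : (N : ℤ) ∣ t
  · obtain ⟨q, rfl⟩ := hdvd
    have h1 : Complex.exp (2 * (π : ℂ) * Complex.I * (((N : ℤ) * q : ℤ) : ℂ) / (N : ℂ)) = 1 := by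
      rw [show 2 * (π : ℂ) * Complex.I * (((N : ℤ) * q : ℤ) : ℂ) / (N : ℂ)
          = (q : ℂ) * (2 * (π : ℂ) * Complex.I) by push_cast; field_simp]
      exact Complex.exp_int_mul_two_pi_mul_I q
    rw [if_pos (Dvd.intro q rfl)]
    push_cast at h1 ⊢
    rw [h1]
    simp
  · have hx : Complex.exp (2 * (π : ℂ) * Complex.I * (t : ℂ) / (N : ℂ)) ≠ 1 := by
      intro h
      rcases Complex.exp_eq_one_iff.1 h with ⟨q, hq⟩
      apply hdvd
      have h2πI : (2 * (π : ℂ) * Complex.I) ≠ 0 := by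
        simp [Real.pi_ne_zero, Complex.I_ne_zero, Complex.ofReal_ne_zero]
      have key : (2 * (π : ℂ) * Complex.I) * (t : ℂ)
          = (2 * (π : ℂ) * Complex.I) * ((q : ℂ) * (N : ℂ)) := by
        field_simp at hq
        linear_combination (2 * (π : ℂ) * Complex.I) * hq
      have ht : (t : ℂ) = ((q * N : ℤ) : ℂ) := by
        push_cast
        exact mul_left_cancel₀ h2πI key
      have : t = q * N := by exact_mod_cast ht
      exact ⟨q, by rw [this]; ring⟩
    rw [geom_sum_eq hx, if_neg hdvd]
    have hxN : Complex.exp (2 * (π : ℂ) * Complex.I * (t : ℂ) / (N : ℂ)) ^ N = 1 := by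
      rw [← Complex.exp_nat_mul,
        show (N : ℂ) * (2 * (π : ℂ) * Complex.I * (t : ℂ) / (N : ℂ))
          = (t : ℂ) * (2 * (π : ℂ) * Complex.I) by field_simp]
      exact Complex.exp_int_mul_two_pi_mul_I t
    rw [hxN]
    simp


section D
variable {s : ℕ} (a b : Fin s → ℝ) (f : (Fin s → ℝ) → ℝ)

lemma one_le_sqrt2 : (1 : ℝ) ≤ Real.sqrt 2 := by
  rw [show (1:ℝ) = Real.sqrt 1 by simp]
  exact Real.sqrt_le_sqrt (by norm_num)

lemma S_B (habs : Summable fun k : Fin s → ℕ =>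
      Real.sqrt 2 ^ zcount (fun j => ((k j : ℤ))) * |cosCoef a b f (fun j => (k j : ℤ))|) :
    Summable fun k : Fin s → ℤ => |Bf a b f k| := by
  set H : (Fin s → ℕ) → ℝ := fun k =>
    Real.sqrt 2 ^ zcount (fun j => ((k j : ℤ))) * |cosCoef a b f (fun j => (k j : ℤ))| with hH
  have hHnn : ∀ m, 0 ≤ H m := fun m => by
    apply mul_nonneg (pow_nonneg (Real.sqrt_nonneg 2) _) (abs_nonneg _)
  have hprod : Summable fun p : (Fin s → ℕ) × (Fin s → Bool) => H p.1 := by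
    have h1 : Summable fun p : (Fin s → ℕ) × (Fin s → Bool) => H p.1 * 1 :=
      Summable.mul_of_nonneg habs Summable.of_finite hHnn (fun _ => zero_le_one)
    simpa using h1
  have hι : Function.Injective
      (fun k : Fin s → ℤ => ((nA k, fun j => decide (k j < 0)) :
        (Fin s → ℕ) × (Fin s → Bool))) := by
    intro k1 k2 h
    have h1 := congrArg Prod.fst h
    have h2 := congrArg Prod.snd h
    simp only at h1 h2
    funext j
    have e1 : (k1 j).natAbs = (k2 j).natAbs := congrFun h1 j
    have e2 : decide (k1 j < 0) = decide (k2 j < 0) := congrFun h2 j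
    rw [decide_eq_decide] at e2
    omega
  have hcomp := hprod.comp_injective hι
  apply Summable.of_nonneg_of_le (fun k => abs_nonneg _) _ hcomp
  intro k
  show |Bf a b f k| ≤ H (nA k)
  have hz : H (nA k) = Real.sqrt 2 ^ (zcount k) * |cosCoef a b f k| := by
    rw [hH]
    simp only [nA]
    rw [zcount_natAbs k, cosCoef_nA a b f k]
  rw [hz]
  unfold Bf
  rw [abs_mul, abs_of_nonneg (zpow_nonneg (Real.sqrt_nonneg 2) _)]
  apply mul_le_mul_of_nonneg_right _ (abs_nonneg _)
  calc Real.sqrt 2 ^ (-(zcount k : ℤ)) ≤ Real.sqrt 2 ^ ((zcount k : ℤ)) :=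
        zpow_le_zpow_right₀ one_le_sqrt2 (by omega)
    _ = Real.sqrt 2 ^ (zcount k) := zpow_natCast _ _

variable (μ : Measure (Fin s → ℝ)) [IsProbabilityMeasure μ]

lemma prodcos_cont (r : Fin s → ℝ) :
    Continuous fun y : Fin s → ℝ => ∏ j, Real.cos (π * r j * (y j - a j) / (b j - a j)) := by
  apply continuous_finset_prod
  intro j _
  exact Real.continuous_cos.comp (by fun_prop)

lemma prodcos_bound (r : Fin s → ℝ) (y : Fin s → ℝ) :
    |∏ j, Real.cos (π * r j * (y j - a j) / (b j - a j))| ≤ 1 := by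
  rw [Finset.abs_prod]
  exact Finset.prod_le_one (fun j _ => abs_nonneg _) (fun j _ => Real.abs_cos_le_one _)

lemma prodcos_integrable (r : Fin s → ℝ) :
    Integrable (fun y : Fin s → ℝ =>
      ∏ j, Real.cos (π * r j * (y j - a j) / (b j - a j))) μ := by
  apply MeasureTheory.Integrable.mono' (integrable_const (1 : ℝ))
    ((prodcos_cont a b r).aestronglyMeasurable)
  filter_upwards with y
  rw [Real.norm_eq_abs]
  exact prodcos_bound a b r y

lemma m_bound (k : Fin s → ℤ) : |cosTransform a b μ k| ≤ 1 := by
  unfold cosTransform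
  rw [← Real.norm_eq_abs]
  refine le_trans (MeasureTheory.norm_integral_le_integral_norm _) ?_
  simp only [Real.norm_eq_abs]
  have h1 : ∫ y, |∏ j, Real.cos (π * (k j : ℝ) * (y j - a j) / (b j - a j))| ∂μ
      ≤ ∫ _, (1:ℝ) ∂μ := by
    apply MeasureTheory.integral_mono
      ((prodcos_integrable a b μ (fun j => (k j : ℝ))).abs) (integrable_const 1)
    intro y
    exact prodcos_bound a b (fun j => (k j : ℝ)) y
  simpa using h1

end D

section E
variable {s : ℕ} (a b : Fin s → ℝ) (f : (Fin s → ℝ) → ℝ)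

/-- the exponential kernel -/
def Ef (N n : ℕ) (t : ℤ) : ℂ :=
  Complex.exp (2 * (π : ℂ) * Complex.I * (n : ℂ) * (t : ℂ) / (N : ℂ))

lemma Ef_norm (N n : ℕ) (t : ℤ) : ‖Ef N n t‖ = 1 := by
  unfold Ef
  rw [show (2 * (π : ℂ) * Complex.I * (n : ℂ) * (t : ℂ) / (N : ℂ))
      = ((2 * π * n * t / N : ℝ) : ℂ) * Complex.I by push_cast; ring]
  exact Complex.norm_exp_ofReal_mul_I _

lemma Ef_add (N n : ℕ) (t u : ℤ) : Ef N n t * Ef N n u = Ef N n (t + u) := by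
  unfold Ef
  rw [← Complex.exp_add]
  congr 1
  push_cast
  ring

lemma lat_cos (hab : ∀ j, a j < b j) (N : ℕ) (g : Fin s → ℤ) (n : ℕ) (k : ℤ) (j : Fin s) :
    Real.cos (π * (k : ℝ) * (latPoint a b N g n j - a j) / (b j - a j))
      = Real.cos (2 * π * k * ((n : ℝ) * (g j : ℝ) / (N : ℝ))) := by
  have hd : b j - a j ≠ 0 := sub_ne_zero.2 (hab j).ne'
  unfold latPoint
  rw [add_sub_cancel_right, mul_div_assoc, mul_div_cancel_right₀ _ hd]
  exact tent_cos k _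

def E1f (N n : ℕ) (g : Fin s → ℤ) (j : Fin s) (x : ℤ) : ℂ :=
  Complex.exp (2 * (π : ℂ) * Complex.I * (n : ℂ) * (g j : ℂ) * (x : ℂ) / (N : ℂ))

lemma Bf_nA (k : Fin s → ℤ) :
    Bf a b f (fun j => ((k j).natAbs : ℤ)) = Bf a b f k := by
  unfold Bf
  rw [zcount_natAbs, cosCoef_nA]

lemma fiber_sum (N : ℕ) (g : Fin s → ℤ) (n : ℕ) (m : Fin s → ℕ) :
    (∑ k : {k : Fin s → ℤ // nA k = m},
      (Bf a b f k.1 : ℂ) * Ef N n (∑ j, k.1 j * g j))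
    = ((cosCoef a b f (fun j => (m j : ℤ)) * Real.sqrt 2 ^ zcount (fun j => ((m j : ℤ))) *
        ∏ j, Real.cos (2 * π * (m j : ℝ) * ((n : ℝ) * (g j : ℝ) / (N : ℝ))) : ℝ) : ℂ) := by
  classical
  have hterm : ∀ k : {k : Fin s → ℤ // nA k = m},
      (Bf a b f k.1 : ℂ) * Ef N n (∑ j, k.1 j * g j)
        = (Bf a b f (fun j => (m j : ℤ)) : ℂ) * ∏ j, E1f N n g j (k.1 j) := by
    intro k
    have hB : Bf a b f k.1 = Bf a b f (fun j => (m j : ℤ)) := by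
      rw [← Bf_nA a b f k.1]
      congr 1
      funext j
      rw [show (k.1 j).natAbs = m j from congrFun k.2 j]
    have hE : Ef N n (∑ j, k.1 j * g j) = ∏ j, E1f N n g j (k.1 j) := by
      unfold Ef
      rw [show (2 * (π : ℂ) * Complex.I * (n : ℂ) * (((∑ j, k.1 j * g j : ℤ)) : ℂ) / (N : ℂ))
          = ∑ j, (2 * (π : ℂ) * Complex.I * (n : ℂ) * (g j : ℂ) * ((k.1 j : ℤ) : ℂ) / (N : ℂ)) by
        push_cast
        rw [Finset.mul_sum, Finset.sum_div]
        exact Finset.sum_congr rfl fun j _ => by ring]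
      rw [Complex.exp_sum]
      rfl
    rw [hB, hE]
  rw [Finset.sum_congr rfl fun k _ => hterm k, ← Finset.mul_sum]
  rw [sum_fiber_prod m (fun j x => E1f N n g j x)]
  have hfac : ∀ j, (if m j = 0 then E1f N n g j 0 else E1f N n g j (m j) + E1f N n g j (-(m j : ℤ)))
      = (if m j = 0 then (1 : ℂ) else 2) *
        ((Real.cos (2 * π * (m j : ℝ) * ((n : ℝ) * (g j : ℝ) / (N : ℝ))) : ℝ) : ℂ) := by
    intro j
    by_cases h : m j = 0
    · rw [if_pos h, if_pos h]
      unfold E1f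
      simp [h]
    · rw [if_neg h, if_neg h]
      set θ : ℝ := 2 * π * (m j : ℝ) * ((n : ℝ) * (g j : ℝ) / (N : ℝ)) with hθ
      have e1 : E1f N n g j (m j) = Complex.exp ((θ : ℂ) * Complex.I) := by
        unfold E1f
        congr 1
        rw [hθ]
        push_cast
        ring
      have e2 : E1f N n g j (-(m j : ℤ)) = Complex.exp (-(θ : ℂ) * Complex.I) := by
        unfold E1f
        congr 1
        rw [hθ]
        push_cast
        ring
      rw [e1, e2, ← Complex.two_cos, Complex.ofReal_cos]
  rw [Finset.prod_congr rfl fun j _ => hfac j, Finset.prod_mul_distrib, prod_ite_two]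
  have hreal : Bf a b f (fun j => (m j : ℤ)) *
      ((2 : ℝ) ^ zcount (fun j => ((m j : ℤ))) *
        ∏ j, Real.cos (2 * π * (m j : ℝ) * ((n : ℝ) * (g j : ℝ) / (N : ℝ))))
      = cosCoef a b f (fun j => (m j : ℤ)) * Real.sqrt 2 ^ zcount (fun j => ((m j : ℤ))) *
        ∏ j, Real.cos (2 * π * (m j : ℝ) * ((n : ℝ) * (g j : ℝ) / (N : ℝ))) := by
    unfold Bf
    linear_combination (cosCoef a b f (fun j => (m j : ℤ)) *
      ∏ j, Real.cos (2 * π * (m j : ℝ) * ((n : ℝ) * (g j : ℝ) / (N : ℝ)))) *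
        sqrt2_weight (zcount (fun j => ((m j : ℤ))))
  rw [← hreal]
  push_cast
  ring

lemma fbar_lat (hab : ∀ j, a j < b j)
    (habs : Summable fun k : Fin s → ℕ =>
      Real.sqrt 2 ^ zcount (fun j => ((k j : ℤ))) * |cosCoef a b f (fun j => (k j : ℤ))|)
    (N : ℕ) (g : Fin s → ℤ) (n : ℕ) :
    ((fbar a b f (latPoint a b N g n) : ℝ) : ℂ)
      = ∑' k : Fin s → ℤ, (Bf a b f k : ℂ) * Ef N n (∑ j, k j * g j) := by
  have hsum : Summable fun k : Fin s → ℤ => (Bf a b f k : ℂ) * Ef N n (∑ j, k j * g j) := by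
    apply Summable.of_norm
    have : ∀ k : Fin s → ℤ,
        ‖(Bf a b f k : ℂ) * Ef N n (∑ j, k j * g j)‖ = |Bf a b f k| := fun k => by
      rw [norm_mul, Ef_norm, mul_one, Complex.norm_real, Real.norm_eq_abs]
    rw [funext this]
    exact S_B a b f habs
  rw [tsum_collapse _ hsum]
  have hfb : fbar a b f (latPoint a b N g n)
      = ∑' m : Fin s → ℕ,
          (cosCoef a b f (fun j => (m j : ℤ)) * Real.sqrt 2 ^ zcount (fun j => ((m j : ℤ))) *
            ∏ j, Real.cos (2 * π * (m j : ℝ) * ((n : ℝ) * (g j : ℝ) / (N : ℝ)))) := by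
    unfold fbar
    apply tsum_congr
    intro m
    congr 1
    apply Finset.prod_congr rfl
    intro j _
    have h := lat_cos a b hab N g n (m j : ℤ) j
    push_cast at h ⊢
    exact h
  rw [hfb, Complex.ofReal_tsum]
  exact tsum_congr fun m => (fiber_sum a b f N g n m).symm

end E

section F
variable {s : ℕ} (a b : Fin s → ℝ) (f : (Fin s → ℝ) → ℝ)
  (μ : Measure (Fin s → ℝ)) [IsProbabilityMeasure μ]

lemma S_Bm (habs : Summable fun k : Fin s → ℕ =>
      Real.sqrt 2 ^ zcount (fun j => ((k j : ℤ))) * |cosCoef a b f (fun j => (k j : ℤ))|) :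
    Summable fun k : Fin s → ℤ => Bf a b f k * cosTransform a b μ k := by
  apply Summable.of_abs
  apply Summable.of_nonneg_of_le (fun k => abs_nonneg _) _ (S_B a b f habs)
  intro k
  rw [abs_mul]
  exact mul_le_of_le_one_right (abs_nonneg _) (m_bound a b μ k)

lemma cosTransform_eq (m : Fin s → ℕ) :
    (∫ y, ∏ j, Real.cos (π * (m j : ℝ) * (y j - a j) / (b j - a j)) ∂μ)
      = cosTransform a b μ (fun j => (m j : ℤ)) := by
  unfold cosTransform
  apply MeasureTheory.integral_congr_ae
  filter_upwards with y
  apply Finset.prod_congr rfl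
  intro j _
  norm_num

lemma integral_fbar (habs : Summable fun k : Fin s → ℕ =>
      Real.sqrt 2 ^ zcount (fun j => ((k j : ℤ))) * |cosCoef a b f (fun j => (k j : ℤ))|) :
    ∫ y, fbar a b f y ∂μ = ∑' k : Fin s → ℤ, Bf a b f k * cosTransform a b μ k := by
  classical
  set G : (Fin s → ℕ) → (Fin s → ℝ) → ℝ := fun m y =>
    (cosCoef a b f (fun j => (m j : ℤ)) * Real.sqrt 2 ^ zcount (fun j => ((m j : ℤ)))) *
      ∏ j, Real.cos (π * (m j : ℝ) * (y j - a j) / (b j - a j)) with hG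
  have hGint : ∀ m, Integrable (G m) μ := fun m =>
    (prodcos_integrable a b μ (fun j => (m j : ℝ))).const_mul _
  have hGbound : ∀ m, (∫ y, ‖G m y‖ ∂μ)
      ≤ Real.sqrt 2 ^ zcount (fun j => ((m j : ℤ))) * |cosCoef a b f (fun j => (m j : ℤ))| := by
    intro m
    have hb : ∀ y, ‖G m y‖
        ≤ Real.sqrt 2 ^ zcount (fun j => ((m j : ℤ))) * |cosCoef a b f (fun j => (m j : ℤ))| := by
      intro y
      rw [hG]
      simp only [Real.norm_eq_abs, abs_mul]
      rw [abs_of_nonneg (pow_nonneg (Real.sqrt_nonneg 2) _)]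
      calc |cosCoef a b f fun j => (m j : ℤ)| * Real.sqrt 2 ^ zcount (fun j => ((m j : ℤ))) *
            |∏ j, Real.cos (π * (m j : ℝ) * (y j - a j) / (b j - a j))|
          ≤ |cosCoef a b f fun j => (m j : ℤ)| * Real.sqrt 2 ^ zcount (fun j => ((m j : ℤ))) * 1 := by
            apply mul_le_mul_of_nonneg_left (prodcos_bound a b _ y)
            positivity
        _ = Real.sqrt 2 ^ zcount (fun j => ((m j : ℤ))) *
            |cosCoef a b f (fun j => (m j : ℤ))| := by ring
    calc (∫ y, ‖G m y‖ ∂μ) ≤ ∫ _, (Real.sqrt 2 ^ zcount (fun j => ((m j : ℤ))) *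
          |cosCoef a b f (fun j => (m j : ℤ))|) ∂μ :=
        MeasureTheory.integral_mono (hGint m).norm (integrable_const _) hb
      _ = _ := by simp
  have hGsum : Summable fun m => ∫ y, ‖G m y‖ ∂μ := by
    apply Summable.of_nonneg_of_le
      (fun m => MeasureTheory.integral_nonneg (fun y => norm_nonneg _)) hGbound habs
  have key := MeasureTheory.integral_tsum_of_summable_integral_norm hGint hGsum
  have hfbG : ∀ y, fbar a b f y = ∑' m, G m y := by
    intro y
    unfold fbar
    apply tsum_congr
    intro m
    rw [hG]
  rw [show (fun y => fbar a b f y) = fun y => ∑' m, G m y from funext hfbG, ← key]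
  have hGval : ∀ m, (∫ y, G m y ∂μ)
      = (cosCoef a b f (fun j => (m j : ℤ)) * Real.sqrt 2 ^ zcount (fun j => ((m j : ℤ)))) *
        cosTransform a b μ (fun j => (m j : ℤ)) := by
    intro m
    rw [hG]
    rw [MeasureTheory.integral_const_mul]
    rw [cosTransform_eq a b μ m]
  rw [tsum_congr hGval]
  rw [tsum_collapse _ (S_Bm a b f μ habs)]
  apply tsum_congr
  intro m
  have hconst : ∀ k : {k : Fin s → ℤ // nA k = m},
      Bf a b f k.1 * cosTransform a b μ k.1
        = Bf a b f (fun j => (m j : ℤ)) * cosTransform a b μ (fun j => (m j : ℤ)) := by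
    intro k
    have hk : (fun j => (((k.1 j).natAbs : ℤ))) = (fun j => ((m j : ℤ))) := by
      funext j
      rw [show (k.1 j).natAbs = m j from congrFun k.2 j]
    rw [← Bf_nA a b f k.1, ← cosTransform_nA a b μ k.1, hk]
  rw [Finset.sum_congr rfl fun k _ => hconst k, Finset.sum_const, nsmul_eq_mul]
  have hcard : (((Finset.univ (α := {k : Fin s → ℤ // nA k = m})).card : ℕ) : ℝ)
      = 2 ^ zcount (fun j => ((m j : ℤ))) := by
    have h1 := sum_fiber_prod (α := ℝ) m (fun j x => (1 : ℝ))
    simp only [Finset.prod_const_one, Finset.sum_const, nsmul_eq_mul, mul_one] at h1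
    rw [h1, ← prod_ite_two (α := ℝ) m]
    apply Finset.prod_congr rfl
    intro j _
    by_cases h : m j = 0 <;> norm_num [h]
  rw [hcard]
  unfold Bf
  linear_combination (-(cosCoef a b f (fun j => (m j : ℤ)) *
    cosTransform a b μ (fun j => (m j : ℤ)))) * sqrt2_weight (zcount (fun j => ((m j : ℤ))))

end F

def shearE (s : ℕ) : ((Fin s → ℤ) × (Fin s → ℤ)) ≃ ((Fin s → ℤ) × (Fin s → ℤ)) where
  toFun q := (q.1 - q.2, q.2)
  invFun p := (p.1 + p.2, p.2)
  left_inv q := by simp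
  right_inv p := by simp

def zeroE (s : ℕ) : (Fin s → ℤ) ≃
    ({p : (Fin s → ℤ) × (Fin s → ℤ) | p.1 = 0} : Set ((Fin s → ℤ) × (Fin s → ℤ))) where
  toFun k := ⟨(0, k), rfl⟩
  invFun p := (p : (Fin s → ℤ) × (Fin s → ℤ)).2
  left_inv k := rfl
  right_inv p := Subtype.ext (Prod.ext p.2.symm rfl)

def latE (s N : ℕ) (g : Fin s → ℤ) :
    (({h | (∑ j, h j * g j) % (N : ℤ) = 0 ∧ h ≠ 0} : Set (Fin s → ℤ)) × (Fin s → ℤ)) ≃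
    ({p : (Fin s → ℤ) × (Fin s → ℤ) | (N : ℤ) ∣ (∑ j, p.1 j * g j) ∧ p.1 ≠ 0} :
      Set ((Fin s → ℤ) × (Fin s → ℤ))) where
  toFun q := ⟨((q.1 : Fin s → ℤ), q.2), ⟨Int.dvd_of_emod_eq_zero q.1.2.1, q.1.2.2⟩⟩
  invFun p := (⟨(p : (Fin s → ℤ) × (Fin s → ℤ)).1,
    ⟨Int.emod_eq_zero_of_dvd p.2.1, p.2.2⟩⟩, (p : (Fin s → ℤ) × (Fin s → ℤ)).2)
  left_inv q := rfl
  right_inv p := rfl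

end S1

set_option maxHeartbeats 2000000 in
/-- the tent-transformed lattice-rule quadrature of the half-period cosine
expansion `f̄` against the reproducing kernel, minus the true integral of `f̄`, equals the
double sum over the nonzero dual-lattice points; both double series converge absolutely. -/
theorem stmt1 {s : ℕ} (hs : 1 ≤ s) (a b : Fin s → ℝ) (hab : ∀ j, a j < b j)
    (μ : Measure (Fin s → ℝ)) [IsProbabilityMeasure μ]
    (hm : Summable fun k : Fin s → ℤ => |cosTransform a b μ k|)
    (f : (Fin s → ℝ) → ℝ) (hf : Measurable f)
    (habs : Summable fun k : Fin s → ℕ =>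
      Real.sqrt 2 ^ zcount (fun j => ((k j : ℤ))) * |cosCoef a b f (fun j => (k j : ℤ))|)
    (N : ℕ) (hN : 2 ≤ N) (g : Fin s → ℤ) (hg : ∀ j, 1 ≤ g j ∧ g j ≤ (N : ℤ) - 1)
    (L : Set (Fin s → ℤ)) (hL : L = {h | (∑ j, h j * g j) % (N : ℤ) = 0 ∧ h ≠ 0}) :
    (∀ n : ℕ, Summable fun k : Fin s → ℤ =>
      ‖(cosTransform a b μ k : ℂ) *
        Complex.exp (2 * (Real.pi : ℂ) * Complex.I * (n : ℂ) *
          ((∑ j, k j * g j : ℤ) : ℂ) / (N : ℂ))‖) ∧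
    Summable (fun p : L × (Fin s → ℤ) =>
      |Real.sqrt 2 ^ (-(zcount ((p.1 : Fin s → ℤ) - p.2) : ℤ)) *
        cosCoef a b f ((p.1 : Fin s → ℤ) - p.2) * cosTransform a b μ p.2|) ∧
    (1 / (N : ℂ)) * (∑ n ∈ Finset.range N, (fbar a b f (latPoint a b N g n) : ℂ) *
        ∑' k : Fin s → ℤ, (cosTransform a b μ k : ℂ) *
          Complex.exp (2 * (Real.pi : ℂ) * Complex.I * (n : ℂ) *
            ((∑ j, k j * g j : ℤ) : ℂ) / (N : ℂ))) -
      ((∫ y, fbar a b f y ∂μ : ℝ) : ℂ) =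
      ∑' p : L × (Fin s → ℤ),
        ((Real.sqrt 2 ^ (-(zcount ((p.1 : Fin s → ℤ) - p.2) : ℤ)) *
          cosCoef a b f ((p.1 : Fin s → ℤ) - p.2) * cosTransform a b μ p.2 : ℝ) : ℂ) := by
  classical
  subst hL
  have hN0 : (N : ℂ) ≠ 0 := Nat.cast_ne_zero.2 (by omega)
  -- Part 1
  have hker : ∀ n : ℕ, Summable fun k : Fin s → ℤ =>
      ‖(cosTransform a b μ k : ℂ) *
        Complex.exp (2 * (Real.pi : ℂ) * Complex.I * (n : ℂ) *
          ((∑ j, k j * g j : ℤ) : ℂ) / (N : ℂ))‖ := by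
    intro n
    have he : ∀ k : Fin s → ℤ,
        ‖(cosTransform a b μ k : ℂ) *
          Complex.exp (2 * (Real.pi : ℂ) * Complex.I * (n : ℂ) *
            ((∑ j, k j * g j : ℤ) : ℂ) / (N : ℂ))‖ = |cosTransform a b μ k| := by
      intro k
      rw [norm_mul,
        show Complex.exp (2 * (Real.pi : ℂ) * Complex.I * (n : ℂ) *
            ((∑ j, k j * g j : ℤ) : ℂ) / (N : ℂ)) = S1.Ef N n (∑ j, k j * g j) from rfl,
        S1.Ef_norm, mul_one, Complex.norm_real, Real.norm_eq_abs]
    exact (summable_congr he).mpr hm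
  have hSB : Summable fun k : Fin s → ℤ => |S1.Bf a b f k| := S1.S_B a b f habs
  have base : Summable fun p : (Fin s → ℤ) × (Fin s → ℤ) =>
      |S1.Bf a b f p.1| * |cosTransform a b μ p.2| :=
    Summable.mul_of_nonneg hSB hm (fun _ => abs_nonneg _) (fun _ => abs_nonneg _)
  -- Part 2
  have hinj2 : Function.Injective
      (fun q : ({h | (∑ j, h j * g j) % (N : ℤ) = 0 ∧ h ≠ 0} : Set (Fin s → ℤ)) × (Fin s → ℤ) =>
        (((q.1 : Fin s → ℤ) - q.2, q.2) : (Fin s → ℤ) × (Fin s → ℤ))) := by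
    intro q1 q2 h
    simp only [Prod.mk.injEq] at h
    obtain ⟨h1, h2⟩ := h
    rw [h2] at h1
    have h3 : (q1.1 : Fin s → ℤ) = q2.1 := by
      have := congrArg (fun z => z + q2.2) h1
      simpa using this
    exact Prod.ext (Subtype.ext h3) h2
  have part2 : Summable (fun p :
      ({h | (∑ j, h j * g j) % (N : ℤ) = 0 ∧ h ≠ 0} : Set (Fin s → ℤ)) × (Fin s → ℤ) =>
      |Real.sqrt 2 ^ (-(zcount ((p.1 : Fin s → ℤ) - p.2) : ℤ)) *
        cosCoef a b f ((p.1 : Fin s → ℤ) - p.2) * cosTransform a b μ p.2|) := by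
    have hc := base.comp_injective hinj2
    apply (summable_congr (fun q => ?_)).mpr hc
    show |Real.sqrt 2 ^ (-(zcount ((q.1 : Fin s → ℤ) - q.2) : ℤ)) *
        cosCoef a b f ((q.1 : Fin s → ℤ) - q.2) * cosTransform a b μ q.2|
      = |S1.Bf a b f ((q.1 : Fin s → ℤ) - q.2)| * |cosTransform a b μ q.2|
    rw [← abs_mul]
    rfl
  refine ⟨hker, part2, ?_⟩
  -- Part 3
  have hSBcE : ∀ n : ℕ, Summable fun k : Fin s → ℤ =>
      ‖(S1.Bf a b f k : ℂ) * S1.Ef N n (∑ j, k j * g j)‖ := by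
    intro n
    apply (summable_congr (fun k => ?_)).mpr hSB
    rw [norm_mul, S1.Ef_norm, mul_one, Complex.norm_real, Real.norm_eq_abs]
  have hFn : ∀ n : ℕ, Summable fun p : (Fin s → ℤ) × (Fin s → ℤ) =>
      (S1.Bf a b f p.1 : ℂ) * (cosTransform a b μ p.2 : ℂ) *
        S1.Ef N n ((∑ j, p.1 j * g j) + (∑ j, p.2 j * g j)) := by
    intro n
    apply Summable.of_norm
    apply (summable_congr (fun p => ?_)).mpr base
    rw [norm_mul, norm_mul, S1.Ef_norm, mul_one, Complex.norm_real, Complex.norm_real,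
      Real.norm_eq_abs, Real.norm_eq_abs]
  have hterm : ∀ n ∈ Finset.range N,
      ((fbar a b f (latPoint a b N g n) : ℝ) : ℂ) *
        (∑' k : Fin s → ℤ, (cosTransform a b μ k : ℂ) *
          Complex.exp (2 * (Real.pi : ℂ) * Complex.I * (n : ℂ) *
            ((∑ j, k j * g j : ℤ) : ℂ) / (N : ℂ)))
      = ∑' p : (Fin s → ℤ) × (Fin s → ℤ),
          (S1.Bf a b f p.1 : ℂ) * (cosTransform a b μ p.2 : ℂ) *
            S1.Ef N n ((∑ j, p.1 j * g j) + (∑ j, p.2 j * g j)) := by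
    intro n _
    rw [S1.fbar_lat a b f hab habs N g n]
    rw [tsum_mul_tsum_of_summable_norm (hSBcE n) (hker n)]
    apply tsum_congr
    intro p
    rw [← S1.Ef_add N n (∑ j, p.1 j * g j) (∑ j, p.2 j * g j)]
    show ((S1.Bf a b f p.1 : ℂ) * S1.Ef N n (∑ j, p.1 j * g j)) *
        ((cosTransform a b μ p.2 : ℂ) * S1.Ef N n (∑ j, p.2 j * g j)) = _
    ring
  have hinner : ∀ p : (Fin s → ℤ) × (Fin s → ℤ),
      (1 / (N : ℂ)) * ∑ n ∈ Finset.range N,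
        (S1.Bf a b f p.1 : ℂ) * (cosTransform a b μ p.2 : ℂ) *
          S1.Ef N n ((∑ j, p.1 j * g j) + (∑ j, p.2 j * g j))
      = (S1.Bf a b f p.1 : ℂ) * (cosTransform a b μ p.2 : ℂ) *
          (if (N : ℤ) ∣ ((∑ j, p.1 j * g j) + (∑ j, p.2 j * g j)) then 1 else 0) := by
    intro p
    rw [← Finset.mul_sum]
    rw [show (∑ n ∈ Finset.range N,
        S1.Ef N n ((∑ j, p.1 j * g j) + (∑ j, p.2 j * g j)))
      = if (N : ℤ) ∣ ((∑ j, p.1 j * g j) + (∑ j, p.2 j * g j)) then (N : ℂ) else 0 from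
      S1.char_sum N hN _]
    by_cases hd : (N : ℤ) ∣ ((∑ j, p.1 j * g j) + (∑ j, p.2 j * g j))
    · rw [if_pos hd, if_pos hd]
      field_simp
    · rw [if_neg hd, if_neg hd]
      ring
  have hdot : ∀ x y : Fin s → ℤ,
      (∑ j, (x - y) j * g j) + (∑ j, y j * g j) = ∑ j, x j * g j := by
    intro x y
    rw [← Finset.sum_add_distrib]
    exact Finset.sum_congr rfl fun j _ => by simp [sub_mul]
  have hVsum : Summable fun q : (Fin s → ℤ) × (Fin s → ℤ) =>
      (S1.Bf a b f (q.1 - q.2) : ℂ) * (cosTransform a b μ q.2 : ℂ) := by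
    apply Summable.of_norm
    have hinj : Function.Injective (fun q : (Fin s → ℤ) × (Fin s → ℤ) =>
        ((q.1 - q.2, q.2) : (Fin s → ℤ) × (Fin s → ℤ))) := by
      intro q1 q2 h
      simp only [Prod.mk.injEq] at h
      obtain ⟨h1, h2⟩ := h
      rw [h2] at h1
      have h3 : q1.1 = q2.1 := by
        have := congrArg (fun z => z + q2.2) h1
        simpa using this
      exact Prod.ext h3 h2
    have hc := base.comp_injective hinj
    apply (summable_congr (fun q => ?_)).mpr hc
    rw [norm_mul, Complex.norm_real, Complex.norm_real, Real.norm_eq_abs, Real.norm_eq_abs]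
    rfl
  have hsplit : ∀ q : (Fin s → ℤ) × (Fin s → ℤ),
      (S1.Bf a b f (q.1 - q.2) : ℂ) * (cosTransform a b μ q.2 : ℂ) *
        (if (N : ℤ) ∣ (∑ j, q.1 j * g j) then 1 else 0)
      = Set.indicator {p : (Fin s → ℤ) × (Fin s → ℤ) | p.1 = 0}
          (fun q => (S1.Bf a b f (q.1 - q.2) : ℂ) * (cosTransform a b μ q.2 : ℂ)) q
        + Set.indicator {p : (Fin s → ℤ) × (Fin s → ℤ) |
            (N : ℤ) ∣ (∑ j, p.1 j * g j) ∧ p.1 ≠ 0}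
          (fun q => (S1.Bf a b f (q.1 - q.2) : ℂ) * (cosTransform a b μ q.2 : ℂ)) q := by
    intro q
    simp only [Set.indicator_apply, Set.mem_setOf_eq]
    by_cases h0 : q.1 = 0
    · have hdvd : (N : ℤ) ∣ (∑ j, q.1 j * g j) := by
        rw [h0]
        simp
      simp [h0, hdvd]
    · by_cases hdvd : (N : ℤ) ∣ (∑ j, q.1 j * g j) <;> simp [h0, hdvd]
  -- piece 0 : the integral
  have hint : ((∫ y, fbar a b f y ∂μ : ℝ) : ℂ)
      = ∑' q, Set.indicator {p : (Fin s → ℤ) × (Fin s → ℤ) | p.1 = 0}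
          (fun q => (S1.Bf a b f (q.1 - q.2) : ℂ) * (cosTransform a b μ q.2 : ℂ)) q := by
    rw [← _root_.tsum_subtype]
    rw [← Equiv.tsum_eq (S1.zeroE s) (fun x => (S1.Bf a b f ((x : (Fin s → ℤ) × (Fin s → ℤ)).1
      - (x : (Fin s → ℤ) × (Fin s → ℤ)).2) : ℂ) *
        (cosTransform a b μ (x : (Fin s → ℤ) × (Fin s → ℤ)).2 : ℂ))]
    rw [S1.integral_fbar a b f μ habs, Complex.ofReal_tsum]
    apply tsum_congr
    intro k
    show ((S1.Bf a b f k * cosTransform a b μ k : ℝ) : ℂ)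
      = (S1.Bf a b f (0 - k) : ℂ) * (cosTransform a b μ k : ℂ)
    rw [zero_sub, S1.Bf_neg, Complex.ofReal_mul]
  -- piece 1 : the dual-lattice sum
  have hlat : (∑' q, Set.indicator {p : (Fin s → ℤ) × (Fin s → ℤ) |
        (N : ℤ) ∣ (∑ j, p.1 j * g j) ∧ p.1 ≠ 0}
        (fun q => (S1.Bf a b f (q.1 - q.2) : ℂ) * (cosTransform a b μ q.2 : ℂ)) q)
      = ∑' p : ({h | (∑ j, h j * g j) % (N : ℤ) = 0 ∧ h ≠ 0} :
            Set (Fin s → ℤ)) × (Fin s → ℤ),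
          ((Real.sqrt 2 ^ (-(zcount ((p.1 : Fin s → ℤ) - p.2) : ℤ)) *
            cosCoef a b f ((p.1 : Fin s → ℤ) - p.2) * cosTransform a b μ p.2 : ℝ) : ℂ) := by
    rw [← _root_.tsum_subtype]
    rw [← Equiv.tsum_eq (S1.latE s N g)
      (fun x => (S1.Bf a b f ((x : (Fin s → ℤ) × (Fin s → ℤ)).1
        - (x : (Fin s → ℤ) × (Fin s → ℤ)).2) : ℂ) *
          (cosTransform a b μ (x : (Fin s → ℤ) × (Fin s → ℤ)).2 : ℂ))]
    apply tsum_congr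
    intro q
    show (S1.Bf a b f ((q.1 : Fin s → ℤ) - q.2) : ℂ) * (cosTransform a b μ q.2 : ℂ) = _
    rw [show ((Real.sqrt 2 ^ (-(zcount ((q.1 : Fin s → ℤ) - q.2) : ℤ)) *
        cosCoef a b f ((q.1 : Fin s → ℤ) - q.2) * cosTransform a b μ q.2 : ℝ) : ℂ)
      = ((S1.Bf a b f ((q.1 : Fin s → ℤ) - q.2) * cosTransform a b μ q.2 : ℝ) : ℂ) from rfl]
    rw [Complex.ofReal_mul]
  -- now the computation
  rw [Finset.sum_congr rfl hterm]
  rw [← Summable.tsum_finsetSum (fun n _ => (hFn n))]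
  rw [← tsum_mul_left]
  rw [tsum_congr hinner]
  rw [← Equiv.tsum_eq (S1.shearE s) (fun p : (Fin s → ℤ) × (Fin s → ℤ) =>
    (S1.Bf a b f p.1 : ℂ) * (cosTransform a b μ p.2 : ℂ) *
      (if (N : ℤ) ∣ ((∑ j, p.1 j * g j) + (∑ j, p.2 j * g j)) then 1 else 0))]
  rw [show (fun q : (Fin s → ℤ) × (Fin s → ℤ) =>
      (S1.Bf a b f ((S1.shearE s) q).1 : ℂ) * (cosTransform a b μ ((S1.shearE s) q).2 : ℂ) *
        (if (N : ℤ) ∣ ((∑ j, ((S1.shearE s) q).1 j * g j) + (∑ j, ((S1.shearE s) q).2 j * g j))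
          then (1:ℂ) else 0))
    = fun q : (Fin s → ℤ) × (Fin s → ℤ) =>
      (S1.Bf a b f (q.1 - q.2) : ℂ) * (cosTransform a b μ q.2 : ℂ) *
        (if (N : ℤ) ∣ (∑ j, q.1 j * g j) then (1:ℂ) else 0) from funext fun q => by
      show (S1.Bf a b f (q.1 - q.2) : ℂ) * (cosTransform a b μ q.2 : ℂ) *
        (if (N : ℤ) ∣ ((∑ j, (q.1 - q.2) j * g j) + (∑ j, q.2 j * g j)) then (1:ℂ) else 0) = _
      rw [hdot q.1 q.2]]
  rw [tsum_congr hsplit]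
  rw [Summable.tsum_add (hVsum.indicator _) (hVsum.indicator _)]
  rw [hlat, hint]
  ring

end
end

section
/- Let α > 1/2, β be real with β − α > 1/2, and let γ, ρ > 0. Then for every h ∈ ℤ, the series ∑_{k ∈ ℤ} r_{α,γ}(h−k) r_{β,ρ}(k) converges and satisfies ∑_{k ∈ ℤ} r_{α,γ}(h−k) r_{β,ρ}(k) ≤ C · r_{α,γ}(h), where C = max{ 1 + 2γρ ζ(2α+2β), 1 + ρ(ζ(2α) + ζ(2β) + 1/γ + 2^{2α} ζ(2(β−α))) } and ζ denotes the Riemann zeta function. -/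
open MeasureTheory Real Finset

noncomputable section

lemma rone_nonneg {α γ : ℝ} (hγ : 0 ≤ γ) (k : ℤ) : 0 ≤ rone α γ k := by
  unfold rone; split
  · norm_num
  · positivity

lemma rone_neg (α γ : ℝ) (k : ℤ) : rone α γ (-k) = rone α γ k := by
  unfold rone
  rcases eq_or_ne k 0 with rfl | hk
  · simp
  · rw [if_neg (by omega), if_neg hk]
    push_cast
    rw [abs_neg]

lemma summable_zeta {t : ℝ} (ht : 1 < t) : Summable (fun n : ℕ => ((n : ℝ) + 1) ^ (-t)) := by
  have h1 : Summable (fun n : ℕ => (n : ℝ) ^ (-t)) :=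
    Real.summable_nat_rpow.mpr (by linarith)
  exact ((summable_nat_add_iff 1).mpr h1).congr (fun n => by push_cast; ring_nf)

lemma zetaR_nonneg (t : ℝ) : 0 ≤ zetaR t :=
  tsum_nonneg (fun n => Real.rpow_nonneg (by positivity) _)

lemma rpow_anti {x y t : ℝ} (hy : 0 < y) (hxy : y ≤ x) (ht : 0 ≤ t) : x ^ (-t) ≤ y ^ (-t) := by
  rw [Real.rpow_neg (hy.trans_le hxy).le, Real.rpow_neg hy.le]
  exact inv_anti₀ (Real.rpow_pos_of_pos hy t) (Real.rpow_le_rpow hy.le hxy ht)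

lemma rpow_neg_le_one {x t : ℝ} (hx : 1 ≤ x) (ht : 0 ≤ t) : x ^ (-t) ≤ 1 := by
  have := rpow_anti one_pos hx ht
  simpa using this

lemma split_bound {x y H t : ℝ} (hx : 1 ≤ x) (hy : 1 ≤ y) (hxy : x + y = H) (ht : 0 ≤ t) :
    y ^ (-t) * x ^ (-t) ≤ 2 ^ t * H ^ (-t) := by
  have hx0 : (0:ℝ) < x := lt_of_lt_of_le one_pos hx
  have hy0 : (0:ℝ) < y := lt_of_lt_of_le one_pos hy
  have hH0 : (0:ℝ) < H := by linarith
  have key : ∀ z : ℝ, 0 < z → H ≤ 2 * z → z ^ (-t) ≤ 2 ^ t * H ^ (-t) := by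
    intro z hz hz2
    have h1 : (2 * z) ^ (-t) ≤ H ^ (-t) := rpow_anti hH0 hz2 ht
    have h2 : (2 * z) ^ (-t) = 2 ^ (-t) * z ^ (-t) :=
      Real.mul_rpow (by norm_num) hz.le
    calc z ^ (-t) = 2 ^ t * (2 ^ (-t) * z ^ (-t)) := by
          rw [← mul_assoc, ← Real.rpow_add two_pos]; norm_num
      _ ≤ 2 ^ t * H ^ (-t) := by
          rw [← h2]
          exact mul_le_mul_of_nonneg_left h1 (Real.rpow_nonneg (by norm_num) t)
  rcases le_or_gt H (2 * x) with hc | hc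
  · calc y ^ (-t) * x ^ (-t) ≤ 1 * (2 ^ t * H ^ (-t)) :=
        mul_le_mul (rpow_neg_le_one hy ht) (key x hx0 hc)
          (Real.rpow_nonneg hx0.le _) zero_le_one
      _ = 2 ^ t * H ^ (-t) := one_mul _
  · calc y ^ (-t) * x ^ (-t) ≤ (2 ^ t * H ^ (-t)) * 1 :=
        mul_le_mul (key y hy0 (by linarith)) (rpow_neg_le_one hx ht)
          (Real.rpow_nonneg hx0.le _) (by positivity)
      _ = 2 ^ t * H ^ (-t) := mul_one _

lemma summable_rone {α : ℝ} (γ : ℝ) (hα : 1 / 2 < α) : Summable (rone α γ) := by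
  have h1 : Summable (fun k : ℤ => γ * |(k : ℝ)| ^ (-(2 * α))) :=
    (Real.summable_abs_int_rpow (by linarith)).mul_left γ
  have h2 : Summable (fun k : ℤ => if k = 0 then (1 : ℝ) else 0) :=
    summable_of_ne_finset_zero (s := {0}) (fun k hk => if_neg (by simpa using hk))
  exact (h1.add h2).congr (fun k => by
    unfold rone
    rcases eq_or_ne k 0 with rfl | hk
    · simp [Real.zero_rpow (by intro hh; simp at hh; linarith : -(2*α) ≠ 0)]
    · simp [hk])

lemma neg_side (c t : ℝ) (ht : 1 < t) :
    Summable (fun k : ℤ => if k < 0 then c * |(k : ℝ)| ^ (-t) else 0) ∧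
    ∑' k : ℤ, (if k < 0 then c * |(k : ℝ)| ^ (-t) else 0) = c * zetaR t := by
  set g : ℤ → ℝ := fun k => if k < 0 then c * |(k : ℝ)| ^ (-t) else 0 with hg
  set i : ℕ → ℤ := fun n => -((n : ℤ) + 1) with hi
  have hinj : Function.Injective i := by intro a b hab; simp only [hi] at hab; omega
  have hrange : ∀ k : ℤ, k ∉ Set.range i → g k = 0 := by
    intro k hk
    rw [hg]
    by_cases hneg : k < 0
    · exact absurd ⟨(-(k+1)).toNat, by simp only [hi]; omega⟩ hk
    · simp [hneg]
  have hsupp : Function.support g ⊆ Set.range i := by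
    intro k hk
    by_contra hc
    exact hk (hrange k hc)
  have hcomp : ∀ n : ℕ, g (i n) = c * ((n : ℝ) + 1) ^ (-t) := by
    intro n
    have habs : |((-((n : ℤ) + 1) : ℤ) : ℝ)| = (n : ℝ) + 1 := by
      push_cast
      rw [abs_neg, abs_of_nonneg (by positivity)]
    simp only [hg, hi]
    rw [if_pos (by omega), habs]
  have hsum' : Summable (g ∘ i) :=
    ((summable_zeta ht).mul_left c).congr (fun n => (hcomp n).symm)
  have hsummable : Summable g := (hinj.summable_iff hrange).mp hsum'
  refine ⟨hsummable, ?_⟩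
  rw [← hinj.tsum_eq hsupp]
  calc ∑' n : ℕ, g (i n) = ∑' n : ℕ, c * ((n : ℝ) + 1) ^ (-t) := tsum_congr hcomp
    _ = c * zetaR t := tsum_mul_left

lemma pos_tail (c t : ℝ) (ht : 1 < t) (m : ℤ) :
    Summable (fun k : ℤ => if m < k then c * |(k : ℝ) - (m : ℝ)| ^ (-t) else 0) ∧
    ∑' k : ℤ, (if m < k then c * |(k : ℝ) - (m : ℝ)| ^ (-t) else 0) = c * zetaR t := by
  set g : ℤ → ℝ := fun k => if m < k then c * |(k : ℝ) - (m : ℝ)| ^ (-t) else 0 with hg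
  set i : ℕ → ℤ := fun n => m + (n : ℤ) + 1 with hi
  have hinj : Function.Injective i := by intro a b hab; simp only [hi] at hab; omega
  have hrange : ∀ k : ℤ, k ∉ Set.range i → g k = 0 := by
    intro k hk
    rw [hg]
    by_cases hpos : m < k
    · exact absurd ⟨(k - m - 1).toNat, by simp only [hi]; omega⟩ hk
    · simp [hpos]
  have hsupp : Function.support g ⊆ Set.range i := fun k hk => by
    by_contra hc; exact hk (hrange k hc)
  have hcomp : ∀ n : ℕ, g (i n) = c * ((n : ℝ) + 1) ^ (-t) := by
    intro n
    have habs : |((m + (n : ℤ) + 1 : ℤ) : ℝ) - (m : ℝ)| = (n : ℝ) + 1 := by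
      push_cast
      rw [show (m : ℝ) + (n : ℝ) + 1 - (m : ℝ) = (n : ℝ) + 1 by ring,
        abs_of_nonneg (by positivity)]
    simp only [hg, hi]
    rw [if_pos (by omega), habs]
  have hsum' : Summable (g ∘ i) :=
    ((summable_zeta ht).mul_left c).congr (fun n => (hcomp n).symm)
  have hsummable : Summable g := (hinj.summable_iff hrange).mp hsum'
  refine ⟨hsummable, ?_⟩
  rw [← hinj.tsum_eq hsupp]
  calc ∑' n : ℕ, g (i n) = ∑' n : ℕ, c * ((n : ℝ) + 1) ^ (-t) := tsum_congr hcomp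
    _ = c * zetaR t := tsum_mul_left

lemma mid_le (c t : ℝ) (hc : 0 ≤ c) (ht : 1 < t) (m : ℤ) :
    Summable (fun k : ℤ => if 0 < k ∧ k < m then c * |(k : ℝ)| ^ (-t) else 0) ∧
    ∑' k : ℤ, (if 0 < k ∧ k < m then c * |(k : ℝ)| ^ (-t) else 0) ≤ c * zetaR t := by
  set g : ℤ → ℝ := fun k => if 0 < k ∧ k < m then c * |(k : ℝ)| ^ (-t) else 0 with hg
  set i : ℕ → ℤ := fun n => (n : ℤ) + 1 with hi
  have hinj : Function.Injective i := by intro a b hab; simp only [hi] at hab; omega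
  have hrange : ∀ k : ℤ, k ∉ Set.range i → g k = 0 := by
    intro k hk
    rw [hg]
    by_cases hpos : 0 < k ∧ k < m
    · exact absurd ⟨(k - 1).toNat, by simp only [hi]; omega⟩ hk
    · simp [hpos]
  have hsupp : Function.support g ⊆ Set.range i := fun k hk => by
    by_contra hc'; exact hk (hrange k hc')
  have hle : ∀ n : ℕ, g (i n) ≤ c * ((n : ℝ) + 1) ^ (-t) := by
    intro n
    have habs : |(((n : ℤ) + 1 : ℤ) : ℝ)| = (n : ℝ) + 1 := by
      push_cast
      rw [abs_of_nonneg (by positivity)]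
    simp only [hg, hi]
    split
    · rw [habs]
    · positivity
  have hnonneg : ∀ n : ℕ, 0 ≤ g (i n) := by
    intro n
    simp only [hg, hi]
    split
    · positivity
    · exact le_refl 0
  have hzsum : Summable (fun n : ℕ => c * ((n : ℝ) + 1) ^ (-t)) := (summable_zeta ht).mul_left c
  have hsum' : Summable (g ∘ i) := Summable.of_nonneg_of_le hnonneg hle hzsum
  have hsummable : Summable g := (hinj.summable_iff hrange).mp hsum'
  refine ⟨hsummable, ?_⟩
  rw [← hinj.tsum_eq hsupp]
  calc ∑' n : ℕ, g (i n) ≤ ∑' n : ℕ, c * ((n : ℝ) + 1) ^ (-t) := Summable.tsum_le_tsum hle hsum' hzsum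
    _ = c * zetaR t := tsum_mul_left

lemma stmt3_summable (α β γ ρ : ℝ) (hα : 1 / 2 < α) (hβα : 1 / 2 < β - α)
    (hγ : 0 < γ) (hρ : 0 < ρ) (h : ℤ) :
    Summable (fun k : ℤ => rone α γ (h - k) * rone β ρ k) := by
  have hβ : 1 / 2 < β := by linarith
  have hone : ∀ m : ℤ, rone α γ m ≤ max 1 γ := by
    intro m
    unfold rone
    split
    · exact le_max_left 1 γ
    · rename_i hm
      have h1 : (1:ℝ) ≤ |(m:ℝ)| := by
        have := Int.one_le_abs (by omega : m ≠ 0)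
        calc (1:ℝ) = ((1:ℤ):ℝ) := by norm_num
          _ ≤ ((|m|:ℤ):ℝ) := by exact_mod_cast this
          _ = |(m:ℝ)| := by push_cast; ring
      calc γ * |(m:ℝ)| ^ (-(2*α)) ≤ γ * 1 :=
            mul_le_mul_of_nonneg_left (rpow_neg_le_one h1 (by linarith)) hγ.le
        _ = γ := mul_one γ
        _ ≤ max 1 γ := le_max_right 1 γ
  apply Summable.of_nonneg_of_le
    (fun k => mul_nonneg (rone_nonneg hγ.le _) (rone_nonneg hρ.le _))
    (fun k => mul_le_mul_of_nonneg_right (hone (h - k)) (rone_nonneg hρ.le k))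
    ((summable_rone ρ hβ).mul_left (max 1 γ))

lemma key_pos (α β γ ρ : ℝ) (hα : 1 / 2 < α) (hβα : 1 / 2 < β - α)
    (hγ : 0 < γ) (hρ : 0 < ρ) (h : ℤ) (hh : 1 ≤ h) :
    ∑' k : ℤ, rone α γ (h - k) * rone β ρ k ≤
      (1 + ρ * (zetaR (2 * α) + zetaR (2 * β) + 1 / γ +
        (2 : ℝ) ^ (2 * α) * zetaR (2 * (β - α)))) * rone α γ h := by
  have hβ1 : (1:ℝ) < 2 * β := by linarith
  have hα1 : (1:ℝ) < 2 * α := by linarith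
  have hba1 : (1:ℝ) < 2 * (β - α) := by linarith
  have hH1 : (1:ℝ) ≤ (h:ℝ) := by exact_mod_cast hh
  have hH0 : (0:ℝ) < (h:ℝ) := by linarith
  set A : ℝ := (h:ℝ) ^ (-(2 * α)) with hA
  have hA0 : 0 < A := Real.rpow_pos_of_pos hH0 _
  obtain ⟨S2, T2⟩ := neg_side (γ * ρ * A) (2 * β) hβ1
  obtain ⟨S3, T3⟩ := mid_le (γ * ρ * (2:ℝ) ^ (2 * α) * A) (2 * (β - α)) (by positivity) hba1 h
  obtain ⟨S4, T4⟩ := pos_tail (γ * ρ * A) (2 * α) hα1 h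
  have S0 : Summable (fun k : ℤ => if k = 0 then γ * A else 0) :=
    summable_of_ne_finset_zero (s := {0}) (fun k hk => if_neg (by simpa using hk))
  have S1 : Summable (fun k : ℤ => if k = h then ρ * A else 0) :=
    summable_of_ne_finset_zero (s := {h}) (fun k hk => if_neg (by simpa using hk))
  have T0 : ∑' k : ℤ, (if k = 0 then γ * A else 0) = γ * A := tsum_ite_eq (0:ℤ) (fun _ => γ * A)
  have T1 : ∑' k : ℤ, (if k = h then ρ * A else 0) = ρ * A := tsum_ite_eq h (fun _ => ρ * A)
  -- pointwise bound
  have hle : ∀ k : ℤ, rone α γ (h - k) * rone β ρ k ≤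
      (if k = 0 then γ * A else 0) +
      ((if k = h then ρ * A else 0) +
      ((if k < 0 then γ * ρ * A * |(k : ℝ)| ^ (-(2 * β)) else 0) +
      ((if 0 < k ∧ k < h then γ * ρ * (2:ℝ) ^ (2 * α) * A * |(k : ℝ)| ^ (-(2 * (β - α))) else 0) +
      (if h < k then γ * ρ * A * |(k : ℝ) - (h : ℝ)| ^ (-(2 * α)) else 0)))) := by
    intro k
    rcases lt_trichotomy k 0 with hk | hk | hk
    · -- k < 0
      have e : rone α γ (h - k) * rone β ρ k =
          (γ * |((h - k : ℤ) : ℝ)| ^ (-(2 * α))) * (ρ * |(k : ℝ)| ^ (-(2 * β))) := by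
        unfold rone; rw [if_neg (by omega), if_neg (by omega)]
      rw [e, if_neg (by omega : ¬ k = 0), if_neg (by omega : ¬ k = h), if_pos hk,
        if_neg (by omega : ¬ (0 < k ∧ k < h)), if_neg (by omega : ¬ h < k)]
      have hkr : (k : ℝ) < 0 := by exact_mod_cast hk
      have habs : |((h - k : ℤ) : ℝ)| = (h : ℝ) - (k : ℝ) := by
        push_cast
        rw [abs_of_pos (by linarith)]
      have hX : ((h : ℝ) - (k : ℝ)) ^ (-(2 * α)) ≤ A :=
        rpow_anti hH0 (by linarith) (by linarith)
      calc (γ * |((h - k : ℤ) : ℝ)| ^ (-(2 * α))) * (ρ * |(k : ℝ)| ^ (-(2 * β)))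
          = (γ * ρ * |(k : ℝ)| ^ (-(2 * β))) * ((h : ℝ) - (k : ℝ)) ^ (-(2 * α)) := by
            rw [habs]; ring
        _ ≤ (γ * ρ * |(k : ℝ)| ^ (-(2 * β))) * A :=
            mul_le_mul_of_nonneg_left hX (by positivity)
        _ = γ * ρ * A * |(k : ℝ)| ^ (-(2 * β)) := by ring
        _ ≤ 0 + (0 + (γ * ρ * A * |(k : ℝ)| ^ (-(2 * β)) + (0 + 0))) := by simp
    · -- k = 0
      subst hk
      have e : rone α γ (h - 0) * rone β ρ 0 = γ * |(h : ℝ)| ^ (-(2 * α)) := by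
        unfold rone; rw [sub_zero, if_neg (by omega), if_pos rfl, mul_one]
      rw [e, abs_of_pos hH0, if_pos rfl, if_neg (by omega : ¬ (0:ℤ) = h),
        if_neg (by omega : ¬ (0:ℤ) < 0), if_neg (by omega : ¬ ((0:ℤ) < 0 ∧ (0:ℤ) < h)),
        if_neg (by omega : ¬ h < 0)]
      simp [← hA]
    · -- 0 < k
      rcases lt_trichotomy k h with hkh | hkh | hkh
      · -- 0 < k < h
        have e : rone α γ (h - k) * rone β ρ k =
            (γ * |((h - k : ℤ) : ℝ)| ^ (-(2 * α))) * (ρ * |(k : ℝ)| ^ (-(2 * β))) := by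
          unfold rone; rw [if_neg (by omega), if_neg (by omega)]
        rw [e, if_neg (by omega : ¬ k = 0), if_neg (by omega : ¬ k = h),
          if_neg (by omega : ¬ k < 0), if_pos ⟨hk, hkh⟩, if_neg (by omega : ¬ h < k)]
        have hx1 : (1:ℝ) ≤ (k : ℝ) := by exact_mod_cast hk
        have hy1 : (1:ℝ) ≤ (h : ℝ) - (k : ℝ) := by
          have : ((1:ℤ) : ℝ) ≤ ((h - k : ℤ) : ℝ) := by exact_mod_cast (by omega : (1:ℤ) ≤ h - k)
          push_cast at this; linarith
        have habsk : |(k : ℝ)| = (k : ℝ) := abs_of_pos (by linarith)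
        have habs : |((h - k : ℤ) : ℝ)| = (h : ℝ) - (k : ℝ) := by
          push_cast
          rw [abs_of_pos (by linarith)]
        have hsplit : ((h : ℝ) - (k : ℝ)) ^ (-(2 * α)) * ((k : ℝ)) ^ (-(2 * α)) ≤
            (2:ℝ) ^ (2 * α) * A := split_bound hx1 hy1 (by ring) (by linarith)
        have hexp : ((k : ℝ)) ^ (-(2 * β)) =
            ((k : ℝ)) ^ (-(2 * α)) * ((k : ℝ)) ^ (-(2 * (β - α))) := by
          rw [← Real.rpow_add (by linarith : (0:ℝ) < (k : ℝ))]
          congr 1; ring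
        calc (γ * |((h - k : ℤ) : ℝ)| ^ (-(2 * α))) * (ρ * |(k : ℝ)| ^ (-(2 * β)))
            = (γ * ρ * ((k : ℝ)) ^ (-(2 * (β - α)))) *
                (((h : ℝ) - (k : ℝ)) ^ (-(2 * α)) * ((k : ℝ)) ^ (-(2 * α))) := by
              rw [habs, habsk, hexp]; ring
          _ ≤ (γ * ρ * ((k : ℝ)) ^ (-(2 * (β - α)))) * ((2:ℝ) ^ (2 * α) * A) :=
              mul_le_mul_of_nonneg_left hsplit (by positivity)
          _ = γ * ρ * (2:ℝ) ^ (2 * α) * A * |(k : ℝ)| ^ (-(2 * (β - α))) := by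
              rw [habsk]; ring
          _ ≤ 0 + (0 + (0 + (γ * ρ * (2:ℝ) ^ (2 * α) * A * |(k : ℝ)| ^ (-(2 * (β - α))) + 0))) := by
              simp
      · -- k = h
        subst hkh
        have e : rone α γ (k - k) * rone β ρ k = ρ * |(k : ℝ)| ^ (-(2 * β)) := by
          unfold rone; rw [sub_self, if_pos rfl, if_neg (by omega), one_mul]
        rw [e, if_neg (by omega : ¬ k = 0), if_pos rfl, if_neg (by omega : ¬ k < 0),
          if_neg (by omega : ¬ (0 < k ∧ k < k)), if_neg (by omega : ¬ k < k)]
        have : |(k : ℝ)| ^ (-(2 * β)) ≤ A := by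
          rw [abs_of_pos hH0, hA]
          exact Real.rpow_le_rpow_of_exponent_le hH1 (by linarith)
        calc ρ * |(k : ℝ)| ^ (-(2 * β)) ≤ ρ * A := mul_le_mul_of_nonneg_left this hρ.le
          _ ≤ 0 + (ρ * A + (0 + (0 + 0))) := by simp
      · -- h < k
        have e : rone α γ (h - k) * rone β ρ k =
            (γ * |((h - k : ℤ) : ℝ)| ^ (-(2 * α))) * (ρ * |(k : ℝ)| ^ (-(2 * β))) := by
          unfold rone; rw [if_neg (by omega), if_neg (by omega)]
        rw [e, if_neg (by omega : ¬ k = 0), if_neg (by omega : ¬ k = h),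
          if_neg (by omega : ¬ k < 0), if_neg (by omega : ¬ (0 < k ∧ k < h)), if_pos hkh]
        have hkr : (h : ℝ) ≤ (k : ℝ) := by exact_mod_cast hkh.le
        have habs : |((h - k : ℤ) : ℝ)| = |(k : ℝ) - (h : ℝ)| := by
          push_cast
          rw [abs_sub_comm]
        have hX : |(k : ℝ)| ^ (-(2 * β)) ≤ A := by
          rw [abs_of_pos (by linarith : (0:ℝ) < (k : ℝ)), hA]
          calc ((k:ℝ)) ^ (-(2 * β)) ≤ ((h:ℝ)) ^ (-(2 * β)) :=
              rpow_anti hH0 hkr (by linarith)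
            _ ≤ ((h:ℝ)) ^ (-(2 * α)) :=
              Real.rpow_le_rpow_of_exponent_le hH1 (by linarith)
        calc (γ * |((h - k : ℤ) : ℝ)| ^ (-(2 * α))) * (ρ * |(k : ℝ)| ^ (-(2 * β)))
            = (γ * ρ * |(k : ℝ) - (h : ℝ)| ^ (-(2 * α))) * |(k : ℝ)| ^ (-(2 * β)) := by
              rw [habs]; ring
          _ ≤ (γ * ρ * |(k : ℝ) - (h : ℝ)| ^ (-(2 * α))) * A :=
              mul_le_mul_of_nonneg_left hX (by positivity)
          _ = γ * ρ * A * |(k : ℝ) - (h : ℝ)| ^ (-(2 * α)) := by ring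
          _ ≤ 0 + (0 + (0 + (0 + γ * ρ * A * |(k : ℝ) - (h : ℝ)| ^ (-(2 * α))))) := by simp
  have hf : Summable (fun k : ℤ => rone α γ (h - k) * rone β ρ k) :=
    stmt3_summable α β γ ρ hα hβα hγ hρ h
  have hrone : rone α γ h = γ * A := by
    unfold rone
    rw [if_neg (by omega), abs_of_pos hH0, hA]
  refine le_trans (Summable.tsum_le_tsum hle hf (S0.add (S1.add (S2.add (S3.add S4))))) ?_
  rw [Summable.tsum_add S0 (S1.add (S2.add (S3.add S4))), Summable.tsum_add S1 (S2.add (S3.add S4)),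
    Summable.tsum_add S2 (S3.add S4), Summable.tsum_add S3 S4, T0, T1, T2, T4, hrone]
  have hfinal : γ * A + (ρ * A + (γ * ρ * A * zetaR (2 * β) +
      (γ * ρ * (2:ℝ) ^ (2 * α) * A * zetaR (2 * (β - α)) + γ * ρ * A * zetaR (2 * α)))) =
      (1 + ρ * (zetaR (2 * α) + zetaR (2 * β) + 1 / γ +
        (2 : ℝ) ^ (2 * α) * zetaR (2 * (β - α)))) * (γ * A) := by
    field_simp
    ring
  linarith [T3, hfinal]
lemma key_zero (α β γ ρ : ℝ) (hα : 1 / 2 < α) (hβα : 1 / 2 < β - α)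
    (hγ : 0 < γ) (hρ : 0 < ρ) :
    ∑' k : ℤ, rone α γ (0 - k) * rone β ρ k ≤ 1 + 2 * γ * ρ * zetaR (2 * α + 2 * β) := by
  have hs1 : (1:ℝ) < 2 * α + 2 * β := by linarith
  obtain ⟨S2, T2⟩ := neg_side (γ * ρ) (2 * α + 2 * β) hs1
  obtain ⟨S4, T4⟩ := pos_tail (γ * ρ) (2 * α + 2 * β) hs1 0
  have S0 : Summable (fun k : ℤ => if k = 0 then (1:ℝ) else 0) :=
    summable_of_ne_finset_zero (s := {0}) (fun k hk => if_neg (by simpa using hk))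
  have T0 : ∑' k : ℤ, (if k = 0 then (1:ℝ) else 0) = 1 := tsum_ite_eq (0:ℤ) (fun _ => (1:ℝ))
  have hprod : ∀ k : ℤ, k ≠ 0 →
      γ * |(k:ℝ)| ^ (-(2 * α)) * (ρ * |(k:ℝ)| ^ (-(2 * β))) =
      γ * ρ * |(k:ℝ)| ^ (-(2 * α + 2 * β)) := by
    intro k hk
    have h0 : (0:ℝ) < |(k:ℝ)| := by
      rw [abs_pos]
      exact_mod_cast hk
    rw [show -(2 * α + 2 * β) = -(2 * α) + -(2 * β) by ring, Real.rpow_add h0]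
    ring
  have hle : ∀ k : ℤ, rone α γ (0 - k) * rone β ρ k ≤
      (if k = 0 then (1:ℝ) else 0) +
      ((if k < 0 then γ * ρ * |(k : ℝ)| ^ (-(2 * α + 2 * β)) else 0) +
      (if (0:ℤ) < k then γ * ρ * |(k : ℝ) - (((0:ℤ)) : ℝ)| ^ (-(2 * α + 2 * β)) else 0)) := by
    intro k
    rcases lt_trichotomy k 0 with hk | hk | hk
    · have e : rone α γ (0 - k) * rone β ρ k =
          (γ * |((0 - k : ℤ) : ℝ)| ^ (-(2 * α))) * (ρ * |(k : ℝ)| ^ (-(2 * β))) := by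
        unfold rone; rw [if_neg (by omega), if_neg (by omega)]
      rw [e, if_neg (by omega : ¬ k = 0), if_pos hk, if_neg (by omega : ¬ (0:ℤ) < k)]
      have habs : |((0 - k : ℤ) : ℝ)| = |(k:ℝ)| := by
        push_cast
        rw [zero_sub, abs_neg]
      rw [habs, hprod k (by omega)]
      simp
    · subst hk
      have e : rone α γ (0 - 0) * rone β ρ 0 = 1 := by
        unfold rone; norm_num
      rw [e, if_pos rfl, if_neg (by omega : ¬ (0:ℤ) < 0), if_neg (by omega : ¬ (0:ℤ) < 0)]
      simp
    · have e : rone α γ (0 - k) * rone β ρ k =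
          (γ * |((0 - k : ℤ) : ℝ)| ^ (-(2 * α))) * (ρ * |(k : ℝ)| ^ (-(2 * β))) := by
        unfold rone; rw [if_neg (by omega), if_neg (by omega)]
      rw [e, if_neg (by omega : ¬ k = 0), if_neg (by omega : ¬ k < 0), if_pos hk]
      have habs : |((0 - k : ℤ) : ℝ)| = |(k:ℝ)| := by
        push_cast
        rw [zero_sub, abs_neg]
      have habs2 : |(k : ℝ) - (((0:ℤ)) : ℝ)| = |(k:ℝ)| := by
        norm_num
      rw [habs, habs2, hprod k (by omega)]
      simp
  have hf : Summable (fun k : ℤ => rone α γ (0 - k) * rone β ρ k) :=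
    stmt3_summable α β γ ρ hα hβα hγ hρ 0
  refine le_trans (Summable.tsum_le_tsum hle hf (S0.add (S2.add S4))) ?_
  rw [Summable.tsum_add S0 (S2.add S4), Summable.tsum_add S2 S4, T0, T2, T4]
  linarith

/-- for `α > 1/2`, `β − α > 1/2` and `γ, ρ > 0`, for every `h ∈ ℤ` the series
`∑_{k ∈ ℤ} r_{α,γ}(h−k) r_{β,ρ}(k)` converges and is bounded by `C · r_{α,γ}(h)`. -/
theorem stmt3 (α β γ ρ : ℝ) (hα : 1 / 2 < α) (hβα : 1 / 2 < β - α)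
    (hγ : 0 < γ) (hρ : 0 < ρ) (h : ℤ) :
    Summable (fun k : ℤ => rone α γ (h - k) * rone β ρ k) ∧
    ∑' k : ℤ, rone α γ (h - k) * rone β ρ k ≤
      max (1 + 2 * γ * ρ * zetaR (2 * α + 2 * β))
        (1 + ρ * (zetaR (2 * α) + zetaR (2 * β) + 1 / γ +
          (2 : ℝ) ^ (2 * α) * zetaR (2 * (β - α)))) * rone α γ h := by
  refine ⟨stmt3_summable α β γ ρ hα hβα hγ hρ h, ?_⟩
  rcases lt_trichotomy h 0 with hh | hh | hh
  · have heq : (∑' k : ℤ, rone α γ (h - k) * rone β ρ k) =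
        ∑' k : ℤ, rone α γ ((-h) - k) * rone β ρ k := by
      rw [← (Equiv.neg ℤ).tsum_eq (fun k => rone α γ (h - k) * rone β ρ k)]
      refine tsum_congr fun k => ?_
      simp only [Equiv.neg_apply]
      rw [show h - (-k) = -((-h) - k) by ring, rone_neg, rone_neg]
    rw [heq, ← rone_neg α γ h]
    exact le_trans (key_pos α β γ ρ hα hβα hγ hρ (-h) (by omega))
      (mul_le_mul_of_nonneg_right (le_max_right _ _) (rone_nonneg hγ.le _))
  · subst hh
    rw [show rone α γ 0 = 1 from if_pos rfl, mul_one]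
    exact le_trans (key_zero α β γ ρ hα hβα hγ hρ) (le_max_left _ _)
  · exact le_trans (key_pos α β γ ρ hα hβα hγ hρ h (by omega))
      (mul_le_mul_of_nonneg_right (le_max_right _ _) (rone_nonneg hγ.le _))

end
end

section
/- Let h ≥ 2 be an integer and let α > 0 and β be real numbers with β − α > 1/2. Then ∑_{k=1}^{h−1} (h−k)^{−2α} k^{−2β} ≤ 2^{2α} h^{−2α} ζ(2(β−α)), where ζ denotes the Riemann zeta function. -/
open Real Finset

noncomputable section

/-- for an integer `h ≥ 2`, `α > 0` and `β − α > 1/2`,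
`∑_{k=1}^{h−1} (h−k)^{−2α} k^{−2β} ≤ 2^{2α} h^{−2α} ζ(2(β−α))`. -/
theorem stmt4 (h : ℕ) (hh : 2 ≤ h) (α β : ℝ) (hα : 0 < α) (hβα : 1 / 2 < β - α) :
    ∑ k ∈ Finset.Ico 1 h, ((h : ℝ) - (k : ℝ)) ^ (-(2 * α)) * (k : ℝ) ^ (-(2 * β)) ≤
      (2 : ℝ) ^ (2 * α) * (h : ℝ) ^ (-(2 * α)) * zetaR (2 * (β - α)) := by
  set s : ℝ := 2 * (β - α) with hs
  have hs1 : 1 < s := by rw [hs]; linarith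
  have hhpos : (0:ℝ) < h := by positivity
  have hC : (0:ℝ) ≤ (2 : ℝ) ^ (2 * α) * (h : ℝ) ^ (-(2 * α)) := by positivity
  -- pointwise bound
  have key : ∀ k ∈ Finset.Ico 1 h,
      ((h : ℝ) - (k : ℝ)) ^ (-(2 * α)) * (k : ℝ) ^ (-(2 * β)) ≤
        (2 : ℝ) ^ (2 * α) * (h : ℝ) ^ (-(2 * α)) * (k : ℝ) ^ (-s) := by
    intro k hk
    rw [Finset.mem_Ico] at hk
    obtain ⟨hk1, hk2⟩ := hk
    have hk1' : (1:ℝ) ≤ k := by exact_mod_cast hk1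
    have hk2' : (k:ℝ) ≤ (h:ℝ) - 1 := by
      have : (k:ℝ) + 1 ≤ h := by exact_mod_cast hk2
      linarith
    have hkpos : (0:ℝ) < k := by linarith
    have hxpos : (0:ℝ) < (h:ℝ) - k := by linarith
    have hprod : (h:ℝ)/2 ≤ ((h:ℝ) - k) * k := by
      have hh2 : (2:ℝ) ≤ h := by exact_mod_cast hh
      nlinarith [mul_nonneg (sub_nonneg.2 hk1') (sub_nonneg.2 hk2')]
    have e1 : (k : ℝ) ^ (-(2 * β)) = (k : ℝ) ^ (-(2 * α)) * (k : ℝ) ^ (-s) := by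
      rw [← Real.rpow_add hkpos, hs]; ring_nf
    calc ((h : ℝ) - (k : ℝ)) ^ (-(2 * α)) * (k : ℝ) ^ (-(2 * β))
        = (((h:ℝ) - k) * k) ^ (-(2 * α)) * (k : ℝ) ^ (-s) := by
          rw [e1, Real.mul_rpow hxpos.le hkpos.le]; ring
      _ ≤ ((h:ℝ)/2) ^ (-(2 * α)) * (k : ℝ) ^ (-s) := by
          apply mul_le_mul_of_nonneg_right _ (by positivity)
          exact Real.rpow_le_rpow_of_nonpos (by positivity) hprod (by linarith)
      _ = (2 : ℝ) ^ (2 * α) * (h : ℝ) ^ (-(2 * α)) * (k : ℝ) ^ (-s) := by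
          rw [Real.div_rpow hhpos.le (by norm_num),
            Real.rpow_neg (by norm_num : (0:ℝ) ≤ 2) (2*α)]
          rw [div_eq_mul_inv, inv_inv]; ring
  refine le_trans (Finset.sum_le_sum key) ?_
  rw [← Finset.mul_sum]
  apply mul_le_mul_of_nonneg_left _ hC
  -- ∑_{k=1}^{h-1} k^{-s} ≤ ζ(s)
  have hsum : Summable (fun n : ℕ => ((n : ℝ) + 1) ^ (-s)) := by
    have := (Real.summable_nat_rpow (p := -s)).2 (by linarith)
    have h2 := (summable_nat_add_iff 1).2 this
    refine h2.congr fun n => ?_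
    push_cast
    ring_nf
  have e2 : ∑ k ∈ Finset.Ico 1 h, (k : ℝ) ^ (-s)
      = ∑ n ∈ Finset.range (h - 1), ((n : ℝ) + 1) ^ (-s) := by
    rw [Finset.sum_Ico_eq_sum_range]
    refine Finset.sum_congr rfl fun n _ => ?_
    push_cast
    ring_nf
  rw [e2, zetaR]
  exact Summable.sum_le_tsum _ (fun n _ => by positivity) hsum
end
end

section
/- Let s ≥ 1, D = ∏_{j=1}^s [a_j, b_j] with a_j < b_j, and let f : ℝ^s → ℝ be measurable with ∑_{k ∈ ℕ^s} 2^{|k|_0/2} |f̃_cos(k)| < ∞, so that the half-period cosine expansion f̄ of f is defined by an absolutely convergent series. For an integer N ≥ 2, a generating vector g ∈ {1,…,N−1}^s, and 0 ≤ n < N, let p_{φ,n} = φ({n g / N}) × (b−a) + a be the tent-transformed lattice point. Then f̄(p_{φ,n}) = ∑_{h ∈ ℤ^s} (√2)^{−|h|_0} f̃_cos(h) e^{2πi n (h·g)/N}, where the series on the right converges absolutely. -/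
open MeasureTheory Real Finset

noncomputable section

namespace Stmt9Aux

def tau (q : ℕ × Bool) : ℤ := if q.2 then (q.1 : ℤ) else -(q.1 : ℤ)

lemma tau_fst {q : ℕ × Bool} {m : ℤ} (h : tau q = m) : q.1 = m.natAbs := by
  unfold tau at h; split at h <;> omega

lemma tau_pair_natAbs {m : ℤ} {q : ℕ × Bool} (h : tau q = m) :
    tau (m.natAbs, q.2) = m := by
  have h1 := tau_fst h
  unfold tau at h ⊢
  dsimp only at *
  rw [← h1]; exact h

def fiberEquiv (m : ℤ) : {q : ℕ × Bool // tau q = m} ≃ {b : Bool // tau (m.natAbs, b) = m} where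
  toFun q := ⟨q.1.2, tau_pair_natAbs q.2⟩
  invFun b := ⟨(m.natAbs, b.1), b.2⟩
  left_inv q := by
    apply Subtype.ext
    exact (Prod.ext_iff.mpr ⟨(tau_fst q.2).symm, rfl⟩)
  right_inv b := rfl

instance instFiber (m : ℤ) : Fintype {q : ℕ × Bool // tau q = m} :=
  Fintype.ofEquiv _ (fiberEquiv m).symm

lemma card_fiber (m : ℤ) :
    Fintype.card {q : ℕ × Bool // tau q = m} = if m = 0 then 2 else 1 := by
  rw [Fintype.card_congr (fiberEquiv m)]
  by_cases hm : m = 0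
  · subst hm; rw [if_pos rfl]; decide
  · rw [if_neg hm]
    rw [Fintype.card_eq_one_iff]
    have h0 : tau (m.natAbs, decide (0 ≤ m)) = m := by
      unfold tau; rcases le_or_gt 0 m with h | h
      · rw [decide_eq_true h]; simp only [if_true]; omega
      · rw [decide_eq_false (not_le.mpr h)]
        simp only [Bool.false_eq_true, if_false]; omega
    refine ⟨⟨decide (0 ≤ m), h0⟩, fun y => ?_⟩
    apply Subtype.ext
    have hy := y.2
    unfold tau at hy
    dsimp only at hy ⊢
    rcases hb : y.1 with _ | _ <;> rw [hb] at hy <;>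
      simp only [Bool.false_eq_true, if_true, if_false] at hy
    · exact (decide_eq_false (by omega)).symm
    · exact (decide_eq_true (by omega)).symm

def sg {s : ℕ} (p : (Fin s → ℕ) × (Fin s → Bool)) : Fin s → ℤ :=
  fun j => tau (p.1 j, p.2 j)

def piFiberEquiv {s : ℕ} (h : Fin s → ℤ) :
    {p : (Fin s → ℕ) × (Fin s → Bool) // sg p = h} ≃ ∀ j, {q : ℕ × Bool // tau q = h j} where
  toFun p := fun j => ⟨(p.1.1 j, p.1.2 j), congrFun p.2 j⟩
  invFun q := ⟨(fun j => (q j).1.1, fun j => (q j).1.2), funext fun j => (q j).2⟩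
  left_inv p := rfl
  right_inv q := rfl

instance instSgFiber {s : ℕ} (h : Fin s → ℤ) :
    Fintype {p : (Fin s → ℕ) × (Fin s → Bool) // sg p = h} :=
  Fintype.ofEquiv _ (piFiberEquiv h).symm

lemma card_sg_fiber {s : ℕ} (h : Fin s → ℤ) :
    Fintype.card {p : (Fin s → ℕ) × (Fin s → Bool) // sg p = h} = 2 ^ (s - zcount h) := by
  rw [Fintype.card_congr (piFiberEquiv h), Fintype.card_pi]
  have h1 : ∀ j, Fintype.card {q : ℕ × Bool // tau q = h j}
      = if h j = 0 then 2 else 1 := fun j => card_fiber (h j)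
  rw [Finset.prod_congr rfl fun j _ => h1 j]
  rw [← Finset.prod_filter]
  rw [Finset.prod_const]
  congr 1
  have h2 := Finset.card_filter_add_card_filter_not (s := Finset.univ)
    (p := fun j => h j = 0)
  unfold zcount
  have h3 : (Finset.univ.filter fun a => ¬ (fun j => h j = 0) a)
      = (Finset.univ.filter fun j => h j ≠ 0) := rfl
  rw [h3] at h2
  simp only [Finset.card_univ, Fintype.card_fin] at h2
  omega

lemma natAbs_sg {s : ℕ} (p : (Fin s → ℕ) × (Fin s → Bool)) :
    (fun j => ((sg p j).natAbs : ℤ)) = fun j => ((p.1 j : ℤ)) := by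
  funext j
  rcases hb : p.2 j with _ | _ <;> simp [sg, tau, hb]

lemma zcount_natAbs {s : ℕ} (h : Fin s → ℤ) :
    zcount (fun j => ((h j).natAbs : ℤ)) = zcount h := by
  unfold zcount
  congr 1
  apply Finset.filter_congr
  intro j _
  simp [Int.natAbs_eq_zero]

lemma cos_natAbs (m : ℤ) (y : ℝ) :
    Real.cos (π * ((m.natAbs : ℤ) : ℝ) * y) = Real.cos (π * (m : ℝ) * y) := by
  have h1 : ((m.natAbs : ℤ) : ℝ) = |(m : ℝ)| := by
    rw [Nat.cast_natAbs]; push_cast; ring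
  rw [h1]
  rcases abs_cases ((m : ℝ)) with ⟨h2, _⟩ | ⟨h2, _⟩ <;> rw [h2]
  rw [show π * -(m : ℝ) * y = -(π * (m : ℝ) * y) by ring, Real.cos_neg]

lemma cosCoef_natAbs {s : ℕ} (a b : Fin s → ℝ) (f : (Fin s → ℝ) → ℝ) (h : Fin s → ℤ) :
    cosCoef a b f (fun j => ((h j).natAbs : ℤ)) = cosCoef a b f h := by
  unfold cosCoef
  rw [zcount_natAbs]
  congr 1
  refine congrArg _ (funext fun y => ?_)
  congr 1
  exact Finset.prod_congr rfl fun j _ => cos_natAbs (h j) (y j)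

lemma cos_tent_fract (k : ℕ) (t : ℝ) :
    Real.cos (π * k * (1 - |2 * Int.fract t - 1|)) = Real.cos (2 * π * k * t) := by
  have h1 : Real.cos (π * k * (1 - |2 * Int.fract t - 1|))
      = Real.cos (2 * π * k * Int.fract t) := by
    rcases abs_cases (2 * Int.fract t - 1) with ⟨he, _⟩ | ⟨he, _⟩ <;> rw [he]
    · rw [show π * k * (1 - (2 * Int.fract t - 1))
          = ((k : ℤ) : ℝ) * (2 * π) - 2 * π * k * Int.fract t by push_cast; ring]
      rw [Real.cos_int_mul_two_pi_sub]
    · ring_nf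
  rw [h1, show 2 * π * k * Int.fract t
      = 2 * π * k * t - ((k * ⌊t⌋ : ℤ) : ℝ) * (2 * π) by rw [Int.fract]; push_cast; ring]
  rw [Real.cos_sub_int_mul_two_pi]

lemma cos_lat {s : ℕ} (a b : Fin s → ℝ) (hab : ∀ j, a j < b j) (N : ℕ) (g : Fin s → ℤ)
    (n : ℕ) (j : Fin s) (k : ℕ) :
    Real.cos (π * (k : ℝ) * (latPoint a b N g n j - a j) / (b j - a j)) =
      Real.cos (2 * π * (k : ℝ) * ((n : ℝ) * (g j : ℝ) / (N : ℝ))) := by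
  have hd : b j - a j ≠ 0 := sub_ne_zero.mpr (hab j).ne'
  have h1 : π * (k : ℝ) * (latPoint a b N g n j - a j) / (b j - a j)
      = π * k * (1 - |2 * Int.fract ((n : ℝ) * (g j : ℝ) / (N : ℝ)) - 1|) := by
    unfold latPoint
    field_simp
    ring
  rw [h1, cos_tent_fract]

lemma exp_sum_eq {s : ℕ} (N : ℕ) (g : Fin s → ℤ) (n : ℕ) (k : Fin s → ℕ) :
    ∑ ε : Fin s → Bool,
      Complex.exp (2 * (Real.pi : ℂ) * Complex.I * (n : ℂ) *
        ((∑ j, (sg (k, ε) j) * g j : ℤ) : ℂ) / (N : ℂ))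
    = (2 : ℂ) ^ s *
        ∏ j, ((Real.cos (2 * Real.pi * (k j : ℝ) * ((n : ℝ) * (g j : ℝ) / (N : ℝ))) : ℝ) : ℂ) := by
  set θ : Fin s → ℝ := fun j => 2 * Real.pi * (k j : ℝ) * ((n : ℝ) * (g j : ℝ) / (N : ℝ)) with hθ
  have harg : ∀ ε : Fin s → Bool,
      2 * (Real.pi : ℂ) * Complex.I * (n : ℂ) * ((∑ j, (sg (k, ε) j) * g j : ℤ) : ℂ) / (N : ℂ)
      = ∑ j, ((cond (ε j) (θ j) (-(θ j)) : ℝ) : ℂ) * Complex.I := by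
    intro ε
    rw [show ((∑ j, (sg (k, ε) j) * g j : ℤ) : ℂ)
        = ∑ j, (((sg (k, ε) j : ℤ) : ℂ) * ((g j : ℤ) : ℂ)) by push_cast; ring]
    rw [Finset.mul_sum, Finset.sum_div]
    refine Finset.sum_congr rfl fun j _ => ?_
    rcases hb : ε j with _ | _ <;>
      simp only [sg, tau, hb, Bool.false_eq_true, if_true, if_false, cond, hθ] <;>
      push_cast <;> ring
  calc ∑ ε : Fin s → Bool,
      Complex.exp (2 * (Real.pi : ℂ) * Complex.I * (n : ℂ) *
        ((∑ j, (sg (k, ε) j) * g j : ℤ) : ℂ) / (N : ℂ))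
      = ∑ ε : Fin s → Bool, ∏ j, Complex.exp (((cond (ε j) (θ j) (-(θ j)) : ℝ) : ℂ) * Complex.I) := by
        refine Finset.sum_congr rfl fun ε _ => ?_
        rw [harg ε, Complex.exp_sum]
    _ = ∏ j, ∑ b : Bool, Complex.exp (((cond b (θ j) (-(θ j)) : ℝ) : ℂ) * Complex.I) := by
        rw [Finset.prod_univ_sum, Fintype.piFinset_univ]
    _ = ∏ j, (2 * ((Real.cos (θ j) : ℝ) : ℂ)) := by
        refine Finset.prod_congr rfl fun j _ => ?_
        rw [Fintype.sum_bool]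
        simp only [cond]
        rw [Complex.ofReal_neg, Complex.exp_mul_I, Complex.exp_mul_I]
        rw [Complex.cos_neg, Complex.sin_neg, Complex.ofReal_cos]
        ring
    _ = (2 : ℂ) ^ s *
        ∏ j, ((Real.cos (2 * Real.pi * (k j : ℝ) * ((n : ℝ) * (g j : ℝ) / (N : ℝ))) : ℝ) : ℂ) := by
        rw [Finset.prod_mul_distrib, Finset.prod_const, Finset.card_univ, Fintype.card_fin]

section Main

variable {s : ℕ} (a b : Fin s → ℝ) (f : (Fin s → ℝ) → ℝ) (N : ℕ) (g : Fin s → ℤ) (n : ℕ)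

def Efun (h : Fin s → ℤ) : ℂ :=
  Complex.exp (2 * (Real.pi : ℂ) * Complex.I * (n : ℂ) * ((∑ j, h j * g j : ℤ) : ℂ) / (N : ℂ))

def Vfun (h : Fin s → ℤ) : ℂ :=
  ((Real.sqrt 2 ^ (-(zcount h : ℤ)) * cosCoef a b f h : ℝ) : ℂ) * Efun N g n h

def Wfun (h : Fin s → ℤ) : ℂ :=
  ((Real.sqrt 2 ^ (zcount h) * cosCoef a b f h : ℝ) : ℂ) * Efun N g n h

def Tfun (p : (Fin s → ℕ) × (Fin s → Bool)) : ℂ := Wfun a b f N g n (sg p)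

lemma normE (h : Fin s → ℤ) : ‖Efun N g n h‖ = 1 := by
  unfold Efun
  rw [show 2 * (Real.pi : ℂ) * Complex.I * (n : ℂ) * ((∑ j, h j * g j : ℤ) : ℂ) / (N : ℂ)
      = ((2 * Real.pi * n * ((∑ j, h j * g j : ℤ) : ℝ) / N : ℝ) : ℂ) * Complex.I by
    push_cast; ring]
  exact Complex.norm_exp_ofReal_mul_I _

lemma normW (h : Fin s → ℤ) :
    ‖Wfun a b f N g n h‖ = Real.sqrt 2 ^ (zcount h) * |cosCoef a b f h| := by
  unfold Wfun
  rw [norm_mul, normE, mul_one, Complex.norm_real, Real.norm_eq_abs, abs_mul,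
    abs_of_nonneg (pow_nonneg (Real.sqrt_nonneg 2) _)]

lemma normV (h : Fin s → ℤ) :
    ‖Vfun a b f N g n h‖ = Real.sqrt 2 ^ (-(zcount h : ℤ)) * |cosCoef a b f h| := by
  unfold Vfun
  rw [norm_mul, normE, mul_one, Complex.norm_real, Real.norm_eq_abs, abs_mul,
    abs_of_nonneg (zpow_nonneg (Real.sqrt_nonneg 2) _)]

lemma zcount_le (h : Fin s → ℤ) : zcount h ≤ s := by
  unfold zcount
  calc (Finset.univ.filter fun j => h j ≠ 0).card ≤ Finset.univ.card := Finset.card_filter_le _ _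
    _ = s := by simp

lemma hre_key {z : ℕ} (hz : z ≤ s) (x : ℝ) :
    (2 : ℝ) ^ (s - z) * (Real.sqrt 2 ^ z * x) = 2 ^ s * (Real.sqrt 2 ^ (-(z : ℤ)) * x) := by
  have h22 : Real.sqrt 2 * Real.sqrt 2 = 2 := Real.mul_self_sqrt (by norm_num)
  have h2z : Real.sqrt 2 ^ z * Real.sqrt 2 ^ z = 2 ^ z := by rw [← mul_pow, h22]
  have hps : (2 : ℝ) ^ (s - z) * 2 ^ z = 2 ^ s := pow_sub_mul_pow 2 hz
  have hp : Real.sqrt 2 ^ z ≠ 0 :=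
    pow_ne_zero _ (ne_of_gt (Real.sqrt_pos.mpr (by norm_num)))
  have hthis : (2 : ℝ) ^ s = 2 ^ (s - z) * (Real.sqrt 2 ^ z * Real.sqrt 2 ^ z) := by
    rw [h2z, hps]
  rw [zpow_neg, zpow_natCast, hthis]
  field_simp

lemma Tconst (p : (Fin s → ℕ) × (Fin s → Bool)) :
    Tfun a b f N g n p =
      ((Real.sqrt 2 ^ zcount (fun j => ((p.1 j : ℤ))) *
          cosCoef a b f (fun j => (p.1 j : ℤ)) : ℝ) : ℂ) * Efun N g n (sg p) := by
  unfold Tfun Wfun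
  rw [← zcount_natAbs (sg p), ← cosCoef_natAbs a b f (sg p), natAbs_sg]

lemma sumTnorm (habs : Summable fun k : Fin s → ℕ =>
      Real.sqrt 2 ^ zcount (fun j => ((k j : ℤ))) * |cosCoef a b f (fun j => (k j : ℤ))|) :
    Summable fun p : (Fin s → ℕ) × (Fin s → Bool) => ‖Tfun a b f N g n p‖ := by
  have heq : (fun p : (Fin s → ℕ) × (Fin s → Bool) => ‖Tfun a b f N g n p‖)
      = fun p => Real.sqrt 2 ^ zcount (fun j => ((p.1 j : ℤ))) *
          |cosCoef a b f (fun j => (p.1 j : ℤ))| := by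
    funext p
    rw [Tconst]
    rw [norm_mul, normE, mul_one, Complex.norm_real, Real.norm_eq_abs, abs_mul,
      abs_of_nonneg (pow_nonneg (Real.sqrt_nonneg 2) _)]
  rw [heq]
  refine (summable_prod_of_nonneg ?_).mpr ⟨fun x => Summable.of_finite, ?_⟩
  · intro p
    positivity
  · have h2 : (fun x : Fin s → ℕ => ∑' _ : Fin s → Bool,
        (Real.sqrt 2 ^ zcount (fun j => ((x j : ℤ))) * |cosCoef a b f (fun j => (x j : ℤ))|))
        = fun x => (Nat.card (Fin s → Bool) : ℝ) *
          (Real.sqrt 2 ^ zcount (fun j => ((x j : ℤ))) * |cosCoef a b f (fun j => (x j : ℤ))|) := by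
      funext x
      rw [tsum_const, nsmul_eq_mul]
    rw [h2]
    exact habs.mul_left _

lemma fib_tsum (h : Fin s → ℤ) :
    ∑' q : {p : (Fin s → ℕ) × (Fin s → Bool) // sg p = h}, Tfun a b f N g n q.1
      = ((2 ^ (s - zcount h) : ℕ) : ℂ) * Wfun a b f N g n h := by
  have hconst : ∀ q : {p : (Fin s → ℕ) × (Fin s → Bool) // sg p = h},
      Tfun a b f N g n q.1 = Wfun a b f N g n h := by
    intro q
    unfold Tfun
    rw [q.2]
  rw [tsum_congr hconst, tsum_const, nsmul_eq_mul, Nat.card_eq_fintype_card, card_sg_fiber]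

lemma fib_tsum_norm (h : Fin s → ℤ) :
    ∑' q : {p : (Fin s → ℕ) × (Fin s → Bool) // sg p = h}, ‖Tfun a b f N g n q.1‖
      = ((2 ^ (s - zcount h) : ℕ) : ℝ) * ‖Wfun a b f N g n h‖ := by
  have hconst : ∀ q : {p : (Fin s → ℕ) × (Fin s → Bool) // sg p = h},
      ‖Tfun a b f N g n q.1‖ = ‖Wfun a b f N g n h‖ := by
    intro q
    unfold Tfun
    rw [q.2]
  rw [tsum_congr hconst, tsum_const, nsmul_eq_mul, Nat.card_eq_fintype_card, card_sg_fiber]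

lemma W2V (h : Fin s → ℤ) :
    ((2 ^ (s - zcount h) : ℕ) : ℂ) * Wfun a b f N g n h
      = (2 : ℂ) ^ s * Vfun a b f N g n h := by
  have hreal := hre_key (s := s) (zcount_le h) (cosCoef a b f h)
  unfold Wfun Vfun
  calc ((2 ^ (s - zcount h) : ℕ) : ℂ) *
        (((Real.sqrt 2 ^ (zcount h) * cosCoef a b f h : ℝ) : ℂ) * Efun N g n h)
      = (((2 : ℝ) ^ (s - zcount h) * (Real.sqrt 2 ^ (zcount h) * cosCoef a b f h) : ℝ) : ℂ)
          * Efun N g n h := by push_cast; ring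
    _ = (((2 : ℝ) ^ s * (Real.sqrt 2 ^ (-(zcount h : ℤ)) * cosCoef a b f h) : ℝ) : ℂ)
          * Efun N g n h := by rw [hreal]
    _ = (2 : ℂ) ^ s * (((Real.sqrt 2 ^ (-(zcount h : ℤ)) * cosCoef a b f h : ℝ) : ℂ)
          * Efun N g n h) := by push_cast; ring

end Main

end Stmt9Aux

set_option maxHeartbeats 2000000 in
/-- the value of the half-period cosine expansion `f̄` at a tent-transformed
lattice point equals an absolutely convergent Fourier series over `ℤ^s`. -/
theorem stmt9 {s : ℕ} (hs : 1 ≤ s) (a b : Fin s → ℝ) (hab : ∀ j, a j < b j)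
    (f : (Fin s → ℝ) → ℝ) (hf : Measurable f)
    (habs : Summable fun k : Fin s → ℕ =>
      Real.sqrt 2 ^ zcount (fun j => ((k j : ℤ))) * |cosCoef a b f (fun j => (k j : ℤ))|)
    (N : ℕ) (hN : 2 ≤ N) (g : Fin s → ℤ) (hg : ∀ j, 1 ≤ g j ∧ g j ≤ (N : ℤ) - 1)
    (n : ℕ) (hn : n < N) :
    Summable (fun h : Fin s → ℤ =>
      ‖((Real.sqrt 2 ^ (-(zcount h : ℤ)) * cosCoef a b f h : ℝ) : ℂ) *
        Complex.exp (2 * (Real.pi : ℂ) * Complex.I * (n : ℂ) *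
          ((∑ j, h j * g j : ℤ) : ℂ) / (N : ℂ))‖) ∧
    (fbar a b f (latPoint a b N g n) : ℂ) =
      ∑' h : Fin s → ℤ,
        ((Real.sqrt 2 ^ (-(zcount h : ℤ)) * cosCoef a b f h : ℝ) : ℂ) *
          Complex.exp (2 * (Real.pi : ℂ) * Complex.I * (n : ℂ) *
            ((∑ j, h j * g j : ℤ) : ℂ) / (N : ℂ)) := by
  classical
  set P := latPoint a b N g n with hP
  have hsummand : Summable (fun k : Fin s → ℕ =>
      cosCoef a b f (fun j => (k j : ℤ)) * Real.sqrt 2 ^ zcount (fun j => ((k j : ℤ))) *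
        ∏ j, Real.cos (π * (k j : ℝ) * (P j - a j) / (b j - a j))) := by
    apply Summable.of_abs
    refine Summable.of_nonneg_of_le (fun k => abs_nonneg _) (fun k => ?_) habs
    rw [abs_mul, abs_mul]
    have h1 : |∏ j, Real.cos (π * (k j : ℝ) * (P j - a j) / (b j - a j))| ≤ 1 := by
      rw [Finset.abs_prod]
      exact Finset.prod_le_one (fun j _ => abs_nonneg _) (fun j _ => Real.abs_cos_le_one _)
    have h2 : |Real.sqrt 2 ^ zcount (fun j => ((k j : ℤ)))|
        = Real.sqrt 2 ^ zcount (fun j => ((k j : ℤ))) :=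
      abs_of_nonneg (pow_nonneg (Real.sqrt_nonneg 2) _)
    calc |cosCoef a b f (fun j => (k j : ℤ))| * |Real.sqrt 2 ^ zcount (fun j => ((k j : ℤ)))| *
          |∏ j, Real.cos (π * (k j : ℝ) * (P j - a j) / (b j - a j))|
        ≤ |cosCoef a b f (fun j => (k j : ℤ))| * |Real.sqrt 2 ^ zcount (fun j => ((k j : ℤ)))| * 1 := by
          apply mul_le_mul_of_nonneg_left h1 (by positivity)
      _ = Real.sqrt 2 ^ zcount (fun j => ((k j : ℤ))) * |cosCoef a b f (fun j => (k j : ℤ))| := by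
          rw [h2]; ring
  have hT : Summable (Stmt9Aux.Tfun a b f N g n) :=
    Summable.of_norm (Stmt9Aux.sumTnorm a b f N g n habs)
  set e := Equiv.sigmaFiberEquiv (Stmt9Aux.sg (s := s)) with he
  have hFsum : Summable (fun x : Σ h : Fin s → ℤ,
      {p : (Fin s → ℕ) × (Fin s → Bool) // Stmt9Aux.sg p = h} =>
        Stmt9Aux.Tfun a b f N g n x.2.1) := e.summable_iff.mpr hT
  have hFnorm : Summable (fun x : Σ h : Fin s → ℤ,
      {p : (Fin s → ℕ) × (Fin s → Bool) // Stmt9Aux.sg p = h} =>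
        ‖Stmt9Aux.Tfun a b f N g n x.2.1‖) :=
    e.summable_iff.mpr (Stmt9Aux.sumTnorm a b f N g n habs)
  have h1 : ∑' p, Stmt9Aux.Tfun a b f N g n p
      = ∑' x : Σ h : Fin s → ℤ, {p : (Fin s → ℕ) × (Fin s → Bool) // Stmt9Aux.sg p = h},
          Stmt9Aux.Tfun a b f N g n x.2.1 :=
    (e.tsum_eq (Stmt9Aux.Tfun a b f N g n)).symm
  have h2 : ∑' x : Σ h : Fin s → ℤ, {p : (Fin s → ℕ) × (Fin s → Bool) // Stmt9Aux.sg p = h},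
        Stmt9Aux.Tfun a b f N g n x.2.1
      = ∑' (h : Fin s → ℤ) (q : {p : (Fin s → ℕ) × (Fin s → Bool) // Stmt9Aux.sg p = h}),
          Stmt9Aux.Tfun a b f N g n q.1 :=
    hFsum.tsum_sigma' (fun h => Summable.of_finite)
  have route2 : ∑' p, Stmt9Aux.Tfun a b f N g n p
      = (2 : ℂ) ^ s * ∑' h : Fin s → ℤ, Stmt9Aux.Vfun a b f N g n h := by
    rw [h1, h2]
    rw [tsum_congr (fun h =>
      (Stmt9Aux.fib_tsum a b f N g n h).trans (Stmt9Aux.W2V a b f N g n h))]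
    exact tsum_mul_left
  have route1 : ∑' p, Stmt9Aux.Tfun a b f N g n p
      = (2 : ℂ) ^ s * ((fbar a b f P : ℝ) : ℂ) := by
    rw [Summable.tsum_prod' hT (fun k => Summable.of_finite)]
    have hinner : ∀ k : Fin s → ℕ, (∑' ε : Fin s → Bool, Stmt9Aux.Tfun a b f N g n (k, ε))
        = (2 : ℂ) ^ s * ((cosCoef a b f (fun j => (k j : ℤ)) *
            Real.sqrt 2 ^ zcount (fun j => ((k j : ℤ))) *
            ∏ j, Real.cos (π * (k j : ℝ) * (P j - a j) / (b j - a j)) : ℝ) : ℂ) := by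
      intro k
      rw [tsum_fintype]
      rw [Finset.sum_congr rfl (fun ε _ => Stmt9Aux.Tconst a b f N g n (k, ε))]
      dsimp only
      rw [← Finset.mul_sum]
      rw [show (∑ ε : Fin s → Bool, Stmt9Aux.Efun N g n (Stmt9Aux.sg (k, ε)))
          = (2 : ℂ) ^ s * ∏ j, ((Real.cos (2 * Real.pi * (k j : ℝ) *
              ((n : ℝ) * (g j : ℝ) / (N : ℝ))) : ℝ) : ℂ)
          from Stmt9Aux.exp_sum_eq N g n k]
      have hcos : ∀ j : Fin s,
          ((Real.cos (2 * Real.pi * (k j : ℝ) * ((n : ℝ) * (g j : ℝ) / (N : ℝ))) : ℝ) : ℂ)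
          = ((Real.cos (π * (k j : ℝ) * (P j - a j) / (b j - a j)) : ℝ) : ℂ) := by
        intro j
        rw [hP]
        rw [Stmt9Aux.cos_lat a b hab N g n j (k j)]
      rw [Finset.prod_congr rfl (fun j _ => hcos j)]
      push_cast
      ring
    rw [tsum_congr hinner, tsum_mul_left]
    congr 1
    have hhs : HasSum (fun k : Fin s → ℕ => (((cosCoef a b f (fun j => (k j : ℤ)) *
        Real.sqrt 2 ^ zcount (fun j => ((k j : ℤ))) *
        ∏ j, Real.cos (π * (k j : ℝ) * (P j - a j) / (b j - a j)) : ℝ)) : ℂ))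
        ((fbar a b f P : ℝ) : ℂ) := Complex.hasSum_ofReal.mpr hsummand.hasSum
    exact hhs.tsum_eq
  constructor
  · have hsum1 : Summable (fun h : Fin s → ℤ =>
        ∑' q : {p : (Fin s → ℕ) × (Fin s → Bool) // Stmt9Aux.sg p = h},
          ‖Stmt9Aux.Tfun a b f N g n q.1‖) :=
      ((summable_sigma_of_nonneg (fun x => norm_nonneg _)).mp hFnorm).2
    have heq : (fun h : Fin s → ℤ => ‖Stmt9Aux.Vfun a b f N g n h‖)
        = fun h => ((2 : ℝ) ^ s)⁻¹ *
            ∑' q : {p : (Fin s → ℕ) × (Fin s → Bool) // Stmt9Aux.sg p = h},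
              ‖Stmt9Aux.Tfun a b f N g n q.1‖ := by
      funext h
      rw [Stmt9Aux.fib_tsum_norm, Stmt9Aux.normW, Stmt9Aux.normV]
      push_cast
      rw [Stmt9Aux.hre_key (Stmt9Aux.zcount_le h) |cosCoef a b f h|]
      rw [inv_mul_cancel_left₀ (by positivity : ((2 : ℝ) ^ s) ≠ 0)]
    show Summable fun h : Fin s → ℤ => ‖Stmt9Aux.Vfun a b f N g n h‖
    rw [heq]
    exact hsum1.mul_left _
  · have h2s : ((2 : ℂ) ^ s) ≠ 0 := pow_ne_zero _ two_ne_zero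
    exact mul_left_cancel₀ h2s (route1.symm.trans route2)

end
end

section
/- Let s ≥ 1, D = ∏_{j=1}^s [a_j, b_j] with a_j < b_j, and let f : ℝ^s → ℝ be measurable and bounded on D with ∑_{k ∈ ℕ^s} 2^{|k|_0/2} |f̃_cos(k)| < ∞. For h ∈ ℤ^s define f_h(y) := f(y) ∏_{j=1}^s cos(π h_j (y_j − a_j)/(b_j − a_j)). Then for every y ∈ ℝ^s, ∑_{k ∈ ℤ^s} (√2)^{−|h−k|_0} f̃_cos(h−k) ∏_{j=1}^s cos(π k_j (y_j − a_j)/(b_j − a_j)) = f̄_h(y), where f̄_h denotes the half-period cosine expansion of f_h and the series converges absolutely. -/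
open MeasureTheory Real Finset

noncomputable section

section Aux

variable {s : ℕ}

/-- sign selection: flip signs of `m` on `t`. -/
def sel (t : Finset (Fin s)) (m : Fin s → ℕ) : Fin s → ℤ :=
  fun j => if j ∈ t then -(m j : ℤ) else (m j : ℤ)

/-- support of `m`. -/
def suppm (m : Fin s → ℕ) : Finset (Fin s) := Finset.univ.filter fun j => m j ≠ 0

lemma natAbs_sel (t : Finset (Fin s)) (m : Fin s → ℕ) (j : Fin s) :
    (sel t m j).natAbs = m j := by
  unfold sel; split <;> simp

lemma zcount_eq_card_suppm (m : Fin s → ℕ) :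
    zcount (fun j => (m j : ℤ)) = (suppm m).card := by
  unfold zcount suppm
  congr 1
  ext j
  simp

lemma zcount_of_natAbs {k k' : Fin s → ℤ} (hkk : ∀ j, (k j).natAbs = (k' j).natAbs) :
    zcount k = zcount k' := by
  unfold zcount
  congr 1
  ext j
  simp only [Finset.mem_filter, Finset.mem_univ, true_and, ne_eq,
    ← Int.natAbs_eq_zero, hkk j]

lemma cos_natAbs {k k' : ℤ} (hk : k.natAbs = k'.natAbs) (x : ℝ) :
    Real.cos ((k : ℝ) * x) = Real.cos ((k' : ℝ) * x) := by
  have : k = k' ∨ k = -k' := by omega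
  rcases this with rfl | rfl
  · rfl
  · push_cast
    rw [neg_mul, Real.cos_neg]

lemma cos_natAbs' {k k' : ℤ} (hk : k.natAbs = k'.natAbs) (x : ℝ) :
    Real.cos (π * (k : ℝ) * x) = Real.cos (π * (k' : ℝ) * x) := by
  rw [show π * (k:ℝ) * x = (k:ℝ) * (π * x) by ring, cos_natAbs hk,
    show (k':ℝ) * (π * x) = π * (k':ℝ) * x by ring]

lemma cos_natAbs_div {k k' : ℤ} (hk : k.natAbs = k'.natAbs) (x d : ℝ) :
    Real.cos (π * (k : ℝ) * x / d) = Real.cos (π * (k' : ℝ) * x / d) := by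
  rw [show π * (k:ℝ) * x / d = (k:ℝ) * (π * x / d) by ring, cos_natAbs hk,
    show (k':ℝ) * (π * x / d) = π * (k':ℝ) * x / d by ring]

lemma cosCoef_congr (a b : Fin s → ℝ) (f : (Fin s → ℝ) → ℝ) {k k' : Fin s → ℤ}
    (hkk : ∀ j, (k j).natAbs = (k' j).natAbs) :
    cosCoef a b f k = cosCoef a b f k' := by
  unfold cosCoef
  rw [zcount_of_natAbs hkk]
  congr 1
  refine MeasureTheory.integral_congr_ae (Filter.Eventually.of_forall fun y => ?_)
  dsimp only
  congr 1
  exact Finset.prod_congr rfl fun j _ => cos_natAbs' (hkk j) (y j)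

end Aux
section Aux2

variable {s : ℕ}

lemma integrableAux (a b : Fin s → ℝ) (hab : ∀ j, a j < b j) (f : (Fin s → ℝ) → ℝ)
    (hf : Measurable f) {M : ℝ} (hM : ∀ y ∈ Set.Icc a b, |f y| ≤ M) (k : Fin s → ℤ) :
    MeasureTheory.IntegrableOn (fun y : Fin s → ℝ =>
      f (fun j => y j * (b j - a j) + a j) * ∏ j, Real.cos (π * (k j : ℝ) * y j))
      (Set.Icc 0 1) := by
  have hmeas : Measurable fun y : Fin s → ℝ =>
      f (fun j => y j * (b j - a j) + a j) * ∏ j, Real.cos (π * (k j : ℝ) * y j) := by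
    apply Measurable.mul
    · exact hf.comp (measurable_pi_lambda _ fun j =>
        ((measurable_pi_apply j).mul_const _).add_const _)
    · exact Finset.measurable_prod _ fun j _ =>
        Real.measurable_cos.comp ((measurable_pi_apply j).const_mul _)
  refine MeasureTheory.Integrable.mono' (g := fun _ => |M|)
    (MeasureTheory.integrableOn_const isCompact_Icc.measure_lt_top.ne)
    hmeas.aestronglyMeasurable.restrict ?_
  refine (MeasureTheory.ae_restrict_iff' measurableSet_Icc).2
    (Filter.Eventually.of_forall fun y hy => ?_)
  have h1 : |f (fun j => y j * (b j - a j) + a j)| ≤ M := by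
    apply hM
    constructor
    · intro j
      have h0 : (0:ℝ) ≤ y j := hy.1 j
      have h1 : y j ≤ 1 := hy.2 j
      have := hab j
      simp only
      nlinarith
    · intro j
      have h0 : (0:ℝ) ≤ y j := hy.1 j
      have h1 : y j ≤ 1 := hy.2 j
      have := hab j
      simp only
      nlinarith
  have h2 : |∏ j, Real.cos (π * (k j : ℝ) * y j)| ≤ 1 := by
    rw [Finset.abs_prod]
    exact Finset.prod_le_one (fun j _ => abs_nonneg _) (fun j _ => Real.abs_cos_le_one _)
  have hM0 : 0 ≤ M := le_trans (abs_nonneg _) h1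
  calc ‖f (fun j => y j * (b j - a j) + a j) * ∏ j, Real.cos (π * (k j : ℝ) * y j)‖
      = |f (fun j => y j * (b j - a j) + a j)| * |∏ j, Real.cos (π * (k j : ℝ) * y j)| := by
        rw [Real.norm_eq_abs, abs_mul]
    _ ≤ M * 1 := mul_le_mul h1 h2 (abs_nonneg _) hM0
    _ ≤ |M| := by rw [mul_one]; exact le_abs_self M

lemma int_eq_coef (a b : Fin s → ℝ) (f : (Fin s → ℝ) → ℝ) (k : Fin s → ℤ) :
    Real.sqrt 2 ^ (-(zcount k : ℤ)) * cosCoef a b f k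
      = ∫ y in Set.Icc (0 : Fin s → ℝ) 1,
          f (fun j => y j * (b j - a j) + a j) * ∏ j, Real.cos (π * (k j : ℝ) * y j) := by
  unfold cosCoef
  rw [← mul_assoc]
  have h2 : Real.sqrt 2 ≠ 0 := by positivity
  rw [← zpow_natCast (Real.sqrt 2) (zcount k), ← zpow_add₀ h2]
  simp

end Aux2
section Aux3

variable {s : ℕ}

lemma prodcos_expand (h : Fin s → ℤ) (m : Fin s → ℕ) (y : Fin s → ℝ) :
    (∏ j, Real.cos (π * (h j : ℝ) * y j)) * ∏ j, Real.cos (π * ((m j : ℤ) : ℝ) * y j)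
      = (1/2 : ℝ) ^ s * ∑ t : Finset (Fin s),
          ∏ j, Real.cos (π * (((h - sel t m) j : ℤ) : ℝ) * y j) := by
  have step1 : (∏ j, Real.cos (π * (h j : ℝ) * y j)) *
      ∏ j, Real.cos (π * ((m j : ℤ) : ℝ) * y j)
      = ∏ j, ((Real.cos (π * ((h j + (m j : ℤ) : ℤ) : ℝ) * y j)
          + Real.cos (π * ((h j - (m j : ℤ) : ℤ) : ℝ) * y j)) * (1/2)) := by
    rw [← Finset.prod_mul_distrib]
    refine Finset.prod_congr rfl fun j _ => ?_
    have hA : π * ((h j + (m j : ℤ) : ℤ) : ℝ) * y j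
        = π * (h j : ℝ) * y j + π * ((m j : ℤ) : ℝ) * y j := by push_cast; ring
    have hB : π * ((h j - (m j : ℤ) : ℤ) : ℝ) * y j
        = π * (h j : ℝ) * y j - π * ((m j : ℤ) : ℝ) * y j := by push_cast; ring
    rw [hA, hB, Real.cos_add, Real.cos_sub]
    ring
  rw [step1, Finset.prod_mul_distrib, Finset.prod_const]
  simp only [Finset.card_univ, Fintype.card_fin]
  rw [mul_comm]
  congr 1
  rw [Finset.prod_add, ← Finset.powerset_univ]
  refine Finset.sum_congr rfl fun t ht => ?_
  rw [show Finset.univ \ t = tᶜ by simp [Finset.compl_eq_univ_sdiff],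
    ← Finset.prod_mul_prod_compl t (fun j => Real.cos (π * (((h - sel t m) j : ℤ) : ℝ) * y j))]
  congr 1
  · refine Finset.prod_congr rfl fun j hj => ?_
    have : (h - sel t m) j = h j + (m j : ℤ) := by
      simp [sel, hj, sub_eq_add_neg]
    rw [this]
  · refine Finset.prod_congr rfl fun j hj => ?_
    have hj' : j ∉ t := Finset.mem_compl.1 hj
    have : (h - sel t m) j = h j - (m j : ℤ) := by
      simp [sel, hj']
    rw [this]

lemma coefF (a b : Fin s → ℝ) (hab : ∀ j, a j < b j) (f : (Fin s → ℝ) → ℝ)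
    (hf : Measurable f) {M : ℝ} (hM : ∀ y ∈ Set.Icc a b, |f y| ≤ M)
    (h : Fin s → ℤ) (m : Fin s → ℕ) :
    cosCoef a b (fmod a b f h) (fun j => (m j : ℤ))
      = Real.sqrt 2 ^ zcount (fun j => ((m j : ℤ))) * ((1/2 : ℝ) ^ s *
          ∑ t : Finset (Fin s),
            Real.sqrt 2 ^ (-(zcount (h - sel t m) : ℤ)) * cosCoef a b f (h - sel t m)) := by
  unfold cosCoef
  congr 1
  have key : ∀ y ∈ Set.Icc (0 : Fin s → ℝ) 1,
      fmod a b f h (fun j => y j * (b j - a j) + a j)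
          * ∏ j, Real.cos (π * ((m j : ℤ) : ℝ) * y j)
        = (1/2 : ℝ) ^ s * ∑ t : Finset (Fin s),
            f (fun j => y j * (b j - a j) + a j)
              * ∏ j, Real.cos (π * (((h - sel t m) j : ℤ) : ℝ) * y j) := by
    intro y _
    unfold fmod
    have hc : ∀ j, π * (h j : ℝ) * ((y j * (b j - a j) + a j) - a j) / (b j - a j)
        = π * (h j : ℝ) * y j := by
      intro j
      have hne : b j - a j ≠ 0 := sub_ne_zero.2 (hab j).ne'
      field_simp
      ring
    simp only [add_sub_cancel_right] at hc ⊢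
    rw [show (∏ j, Real.cos (π * (h j : ℝ) * (y j * (b j - a j)) / (b j - a j)))
        = ∏ j, Real.cos (π * (h j : ℝ) * y j) from
      Finset.prod_congr rfl fun j _ => by rw [← hc j]]
    rw [mul_assoc, prodcos_expand h m y, Finset.mul_sum, Finset.mul_sum]
    rw [Finset.mul_sum]
    exact Finset.sum_congr rfl fun t _ => by ring
  rw [MeasureTheory.setIntegral_congr_fun measurableSet_Icc (fun y hy => key y hy),
    MeasureTheory.integral_const_mul]
  congr 1
  rw [MeasureTheory.integral_finset_sum _ fun t _ => integrableAux a b hab f hf hM (h - sel t m)]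
  exact Finset.sum_congr rfl fun t _ => (int_eq_coef a b f (h - sel t m)).symm

end Aux3
section Aux4

variable {s : ℕ}

lemma sel_inter (t : Finset (Fin s)) (m : Fin s → ℕ) :
    sel (t ∩ suppm m) m = sel t m := by
  funext j
  unfold sel
  by_cases hj : m j = 0
  · simp [hj]
  · have hjs : j ∈ suppm m := by simp [suppm, hj]
    by_cases ht : j ∈ t <;> simp [Finset.mem_inter, ht, hjs]

lemma card_filter_inter (m : Fin s → ℕ) (u : Finset (Fin s)) (hu : u ⊆ suppm m) :
    (Finset.univ.filter fun t : Finset (Fin s) => t ∩ suppm m = u).card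
      = 2 ^ (s - (suppm m).card) := by
  have : (Finset.univ.filter fun t : Finset (Fin s) => t ∩ suppm m = u).card
      = ((suppm m)ᶜ.powerset).card := by
    refine Finset.card_bij' (fun t _ => t \ suppm m) (fun v _ => u ∪ v) ?_ ?_ ?_ ?_
    · intro t ht
      simp only [Finset.mem_powerset]
      intro j hj
      simp only [Finset.mem_sdiff] at hj
      simp [Finset.mem_compl, hj.2]
    · intro v hv
      simp only [Finset.mem_powerset] at hv
      simp only [Finset.mem_filter, Finset.mem_univ, true_and]
      ext j
      simp only [Finset.mem_inter, Finset.mem_union]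
      constructor
      · rintro ⟨hj1 | hj1, hj2⟩
        · exact hj1
        · exact absurd hj2 (Finset.mem_compl.1 (hv hj1))
      · intro hj
        exact ⟨Or.inl hj, hu hj⟩
    · intro t ht
      simp only [Finset.mem_filter, Finset.mem_univ, true_and] at ht
      ext j
      simp only [Finset.mem_union, Finset.mem_sdiff]
      constructor
      · rintro (hj | ⟨hj, _⟩)
        · rw [← ht] at hj
          exact (Finset.mem_inter.1 hj).1
        · exact hj
      · intro hj
        by_cases hjs : j ∈ suppm m
        · exact Or.inl (ht ▸ Finset.mem_inter.2 ⟨hj, hjs⟩)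
        · exact Or.inr ⟨hj, hjs⟩
    · intro v hv
      simp only [Finset.mem_powerset] at hv
      ext j
      simp only [Finset.mem_sdiff, Finset.mem_union]
      constructor
      · rintro ⟨hj | hj, hj2⟩
        · exact absurd (hu hj) hj2
        · exact hj
      · intro hj
        exact ⟨Or.inr hj, Finset.mem_compl.1 (hv hj)⟩
  rw [this, Finset.card_powerset, Finset.card_compl, Fintype.card_fin]

lemma count_lemma (m : Fin s → ℕ) (g : (Fin s → ℤ) → ℝ) :
    ∑ t : Finset (Fin s), g (sel t m)
      = 2 ^ (s - (suppm m).card) * ∑ t ∈ (suppm m).powerset, g (sel t m) := by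
  have h1 : ∀ t : Finset (Fin s), t ∈ Finset.univ → t ∩ suppm m ∈ (suppm m).powerset :=
    fun t _ => Finset.mem_powerset.2 (Finset.inter_subset_right)
  rw [← Finset.sum_fiberwise_of_maps_to (g := fun t => t ∩ suppm m) h1
    (fun t => g (sel t m)), Finset.mul_sum]
  refine Finset.sum_congr rfl fun u hu => ?_
  have hcg : ∀ t ∈ Finset.univ.filter (fun t : Finset (Fin s) => t ∩ suppm m = u),
      g (sel t m) = g (sel u m) := by
    intro t ht
    simp only [Finset.mem_filter] at ht
    rw [← sel_inter t m, ht.2]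
  rw [Finset.sum_congr rfl hcg, Finset.sum_const,
    card_filter_inter m u (Finset.mem_powerset.1 hu), nsmul_eq_mul]
  push_cast
  ring

end Aux4
section Aux5

variable {s : ℕ}

def fiberEquiv (m : Fin s → ℕ) :
    ((suppm m).powerset : Finset (Finset (Fin s))) ≃
      ((fun k : Fin s → ℤ => fun j => (k j).natAbs) ⁻¹' {m} : Set (Fin s → ℤ)) where
  toFun := fun t => ⟨sel t.1 m, by
    simp only [Set.mem_preimage, Set.mem_singleton_iff]
    funext j
    exact natAbs_sel _ _ _⟩
  invFun := fun k => ⟨Finset.univ.filter fun j => k.1 j < 0, by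
    simp only [Finset.mem_powerset]
    intro j hj
    simp only [Finset.mem_filter, Finset.mem_univ, true_and] at hj
    have hk := congrFun k.2 j
    simp only at hk
    simp only [suppm, Finset.mem_filter, Finset.mem_univ, true_and]
    omega⟩
  left_inv := fun t => by
    apply Subtype.ext
    ext j
    simp only [Finset.mem_filter, Finset.mem_univ, true_and, sel]
    have ht := Finset.mem_powerset.1 t.2
    by_cases hj : j ∈ t.1
    · have : m j ≠ 0 := by
        have := ht hj
        simpa [suppm] using this
      simp only [hj, if_true, iff_true]
      refine Finset.mem_filter.2 ⟨Finset.mem_univ _, ?_⟩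
      show (if j ∈ (t : Finset (Fin s)) then -(m j : ℤ) else (m j : ℤ)) < 0
      rw [if_pos hj]
      omega
    · simp only [hj, if_false, iff_false, not_lt]
      intro hmem
      have h2 : (if j ∈ (t : Finset (Fin s)) then -(m j : ℤ) else (m j : ℤ)) < 0 :=
        (Finset.mem_filter.1 hmem).2
      rw [if_neg hj] at h2
      omega
  right_inv := fun k => by
    apply Subtype.ext
    funext j
    have hk := congrFun k.2 j
    simp only at hk
    simp only [sel, Finset.mem_filter, Finset.mem_univ, true_and]
    split <;> omega

lemma fiber_tsum (m : Fin s → ℕ) (G : (Fin s → ℤ) → ℝ) :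
    ∑' k : ((fun k : Fin s → ℤ => fun j => (k j).natAbs) ⁻¹' {m} : Set (Fin s → ℤ)), G k
      = ∑ t ∈ (suppm m).powerset, G (sel t m) := by
  rw [← Equiv.tsum_eq (fiberEquiv m) (fun k => G (k : Fin s → ℤ))]
  exact Finset.tsum_subtype _ (fun t => G (sel t m))

end Aux5
section Aux6

variable {s : ℕ}

lemma summable_abs_main (a b : Fin s → ℝ) (f : (Fin s → ℝ) → ℝ)
    (habs : Summable fun k : Fin s → ℕ =>
      Real.sqrt 2 ^ zcount (fun j => ((k j : ℤ))) * |cosCoef a b f (fun j => (k j : ℤ))|)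
    (h : Fin s → ℤ) (y : Fin s → ℝ) :
    Summable (fun k : Fin s → ℤ =>
      |Real.sqrt 2 ^ (-(zcount (h - k) : ℤ)) * cosCoef a b f (h - k) *
        ∏ j, Real.cos (π * (k j : ℝ) * (y j - a j) / (b j - a j))|) := by
  classical
  set H : (Fin s → ℕ) → ℝ := fun m =>
    Real.sqrt 2 ^ zcount (fun j => ((m j : ℤ))) * |cosCoef a b f (fun j => (m j : ℤ))| with hH
  have hHnn : ∀ m, 0 ≤ H m := fun m => by positivity
  set nb : (Fin s → ℤ) → (Fin s → ℕ) := fun k => fun j => ((h - k) j).natAbs with hnb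
  have hnatAbs : ∀ (k : Fin s → ℤ) (j : Fin s),
      ((fun j => ((nb k j : ℤ))) j).natAbs = ((h - k) j).natAbs := by
    intro k j
    simp only [nb]
    omega
  have bound : ∀ k : Fin s → ℤ,
      |Real.sqrt 2 ^ (-(zcount (h - k) : ℤ)) * cosCoef a b f (h - k) *
        ∏ j, Real.cos (π * (k j : ℝ) * (y j - a j) / (b j - a j))| ≤ H (nb k) := by
    intro k
    have hz : zcount (fun j => ((nb k j : ℤ))) = zcount (h - k) := zcount_of_natAbs (hnatAbs k)
    have hcc : cosCoef a b f (fun j => ((nb k j : ℤ))) = cosCoef a b f (h - k) :=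
      cosCoef_congr a b f (hnatAbs k)
    rw [hH]
    simp only [hz, hcc]
    rw [abs_mul, abs_mul]
    have hs2 : (1:ℝ) ≤ Real.sqrt 2 := by
      rw [show (1:ℝ) = Real.sqrt 1 from Real.sqrt_one.symm]
      exact Real.sqrt_le_sqrt (by norm_num)
    have h1 : |Real.sqrt 2 ^ (-(zcount (h - k) : ℤ))| ≤ Real.sqrt 2 ^ zcount (h - k) := by
      rw [abs_of_nonneg (by positivity), ← zpow_natCast (Real.sqrt 2) (zcount (h - k))]
      exact zpow_le_zpow_right₀ hs2 (by omega)
    have h2 : |∏ j, Real.cos (π * (k j : ℝ) * (y j - a j) / (b j - a j))| ≤ 1 := by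
      rw [Finset.abs_prod]
      exact Finset.prod_le_one (fun j _ => abs_nonneg _) (fun j _ => Real.abs_cos_le_one _)
    calc |Real.sqrt 2 ^ (-(zcount (h - k) : ℤ))| * |cosCoef a b f (h - k)| * |∏ j, Real.cos (π * (k j : ℝ) * (y j - a j) / (b j - a j))|
        ≤ Real.sqrt 2 ^ zcount (h - k) * |cosCoef a b f (h - k)| * 1 := by
          apply mul_le_mul _ h2 (abs_nonneg _) (by positivity)
          exact mul_le_mul_of_nonneg_right h1 (abs_nonneg _)
      _ = Real.sqrt 2 ^ zcount (h - k) * |cosCoef a b f (h - k)| := mul_one _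
  have card_fib : ∀ (u : Finset (Fin s → ℤ)) (m' : Fin s → ℕ),
      (u.filter fun k => nb k = m').card ≤ 2 ^ s := by
    intro u m'
    have hle : (u.filter fun k => nb k = m').card
        ≤ (Finset.univ : Finset (Finset (Fin s))).card := by
      apply Finset.card_le_card_of_injOn
        (fun k => Finset.univ.filter fun j => (h - k) j < 0)
      · intro k _
        exact Finset.mem_univ _
      · intro k1 h1 k2 h2 he
        simp only [Finset.coe_filter, Set.mem_setOf_eq] at h1 h2
        funext j
        have e1 := congrFun h1.2 j
        have e2 := congrFun h2.2 j
        have e3 : (h - k1) j < 0 ↔ (h - k2) j < 0 := by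
          have := Finset.ext_iff.1 he j
          simpa using this
        simp only [nb, Pi.sub_apply] at e1 e2 e3 ⊢
        omega
    calc (u.filter fun k => nb k = m').card
        ≤ (Finset.univ : Finset (Finset (Fin s))).card := hle
      _ = 2 ^ s := by rw [Finset.card_univ, Fintype.card_finset, Fintype.card_fin]
  apply summable_of_sum_le (fun k => abs_nonneg _)
  intro u
  calc ∑ k ∈ u, |Real.sqrt 2 ^ (-(zcount (h - k) : ℤ)) * cosCoef a b f (h - k) *
          ∏ j, Real.cos (π * (k j : ℝ) * (y j - a j) / (b j - a j))|
      ≤ ∑ k ∈ u, H (nb k) := Finset.sum_le_sum fun k _ => bound k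
    _ = ∑ m' ∈ u.image nb, ∑ k ∈ u.filter (fun k => nb k = m'), H (nb k) :=
        (Finset.sum_fiberwise_of_maps_to (fun k hk => Finset.mem_image_of_mem nb hk) _).symm
    _ ≤ ∑ m' ∈ u.image nb, (2 ^ s : ℝ) * H m' := by
        refine Finset.sum_le_sum fun m' _ => ?_
        have : ∑ k ∈ u.filter (fun k => nb k = m'), H (nb k)
            = ∑ k ∈ u.filter (fun k => nb k = m'), H m' := by
          refine Finset.sum_congr rfl fun k hk => ?_
          rw [(Finset.mem_filter.1 hk).2]
        rw [this, Finset.sum_const, nsmul_eq_mul]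
        exact mul_le_mul_of_nonneg_right (by exact_mod_cast card_fib u m') (hHnn m')
    _ = (2 ^ s : ℝ) * ∑ m' ∈ u.image nb, H m' := by rw [Finset.mul_sum]
    _ ≤ (2 ^ s : ℝ) * ∑' m', H m' := by
        apply mul_le_mul_of_nonneg_left _ (by positivity)
        exact Summable.sum_le_tsum _ (fun m' _ => hHnn m') habs
end Aux6

/-- for each `h ∈ ℤ^s` and `y ∈ ℝ^s`, the absolutely convergent series
`∑_{k ∈ ℤ^s} (√2)^{−|h−k|₀} f̃_cos(h−k) ∏_j cos(π k_j (y_j−a_j)/(b_j−a_j))` equals the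
half-period cosine expansion of the modulated function `f_h` at `y`. -/
theorem stmt10 {s : ℕ} (hs : 1 ≤ s) (a b : Fin s → ℝ) (hab : ∀ j, a j < b j)
    (f : (Fin s → ℝ) → ℝ) (hf : Measurable f)
    (hbdd : ∃ M : ℝ, ∀ y ∈ Set.Icc a b, |f y| ≤ M)
    (habs : Summable fun k : Fin s → ℕ =>
      Real.sqrt 2 ^ zcount (fun j => ((k j : ℤ))) * |cosCoef a b f (fun j => (k j : ℤ))|)
    (h : Fin s → ℤ) (y : Fin s → ℝ) :
    Summable (fun k : Fin s → ℤ =>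
      |Real.sqrt 2 ^ (-(zcount (h - k) : ℤ)) * cosCoef a b f (h - k) *
        ∏ j, Real.cos (π * (k j : ℝ) * (y j - a j) / (b j - a j))|) ∧
    ∑' k : Fin s → ℤ,
        Real.sqrt 2 ^ (-(zcount (h - k) : ℤ)) * cosCoef a b f (h - k) *
          ∏ j, Real.cos (π * (k j : ℝ) * (y j - a j) / (b j - a j)) =
      fbar a b (fmod a b f h) y := by
  classical
  obtain ⟨M, hM⟩ := hbdd
  have hsumabs := summable_abs_main a b f habs h y
  refine ⟨hsumabs, ?_⟩
  set G : (Fin s → ℤ) → ℝ := fun k =>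
    Real.sqrt 2 ^ (-(zcount (h - k) : ℤ)) * cosCoef a b f (h - k) *
      ∏ j, Real.cos (π * (k j : ℝ) * (y j - a j) / (b j - a j)) with hG
  have hsum : Summable G := Summable.of_abs hsumabs
  have hfib := hsum.hasSum.tsum_fiberwise (fun k : Fin s → ℤ => fun j => (k j).natAbs)
  have hterm : (fun m : Fin s → ℕ =>
        ∑' k : ((fun k : Fin s → ℤ => fun j => (k j).natAbs) ⁻¹' {m} : Set (Fin s → ℤ)), G k)
      = (fun m : Fin s → ℕ =>
          cosCoef a b (fmod a b f h) (fun j => (m j : ℤ)) *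
            Real.sqrt 2 ^ zcount (fun j => ((m j : ℤ))) *
            ∏ j, Real.cos (π * (m j : ℝ) * (y j - a j) / (b j - a j))) := by
    funext m
    rw [fiber_tsum m G, coefF a b hab f hf hM h m,
      count_lemma m (fun k => Real.sqrt 2 ^ (-(zcount (h - k) : ℤ)) * cosCoef a b f (h - k)),
      zcount_eq_card_suppm m]
    set c := (suppm m).card with hcdef
    have hc : c ≤ s := by
      simpa using Finset.card_le_univ (suppm m)
    set S := ∑ t ∈ (suppm m).powerset,
      Real.sqrt 2 ^ (-(zcount (h - sel t m) : ℤ)) * cosCoef a b f (h - sel t m) with hSdef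
    set C := ∏ j, Real.cos (π * (m j : ℝ) * (y j - a j) / (b j - a j)) with hCdef
    have hGsel : ∀ t ∈ (suppm m).powerset, G (sel t m)
        = (Real.sqrt 2 ^ (-(zcount (h - sel t m) : ℤ)) * cosCoef a b f (h - sel t m)) * C := by
      intro t _
      rw [hG, hCdef]
      simp only
      congr 1
      refine Finset.prod_congr rfl fun j _ => ?_
      have hna : (sel t m j).natAbs = ((m j : ℤ)).natAbs := by
        rw [natAbs_sel]
        omega
      rw [cos_natAbs_div hna]
      norm_num
    rw [Finset.sum_congr rfl hGsel, ← Finset.sum_mul, ← hSdef]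
    have hsq : Real.sqrt 2 ^ c * Real.sqrt 2 ^ c = (2:ℝ) ^ c := by
      rw [← mul_pow, Real.mul_self_sqrt (by norm_num)]
    have hpow : ((1/2:ℝ)) ^ s * ((2:ℝ) ^ (s - c) * (2:ℝ) ^ c) = 1 := by
      rw [← pow_add, Nat.sub_add_cancel hc, one_div, inv_pow]
      exact inv_mul_cancel₀ (by positivity)
    calc S * C = (Real.sqrt 2 ^ c * Real.sqrt 2 ^ c) * ((1/2:ℝ) ^ s * ((2:ℝ) ^ (s - c) * (2:ℝ) ^ c)) * S * C / (2:ℝ)^c := by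
          rw [hsq, hpow]
          field_simp
      _ = Real.sqrt 2 ^ c * ((1/2:ℝ) ^ s * ((2:ℝ) ^ (s - c) * S)) * Real.sqrt 2 ^ c * C * ((2:ℝ)^c / (2:ℝ)^c) := by
          ring
      _ = Real.sqrt 2 ^ c * ((1/2:ℝ) ^ s * ((2:ℝ) ^ (s - c) * S)) * Real.sqrt 2 ^ c * C := by
          rw [div_self (by positivity : ((2:ℝ)^c) ≠ 0), mul_one]
  rw [hterm] at hfib
  rw [show fbar a b (fmod a b f h) y = ∑' m : Fin s → ℕ,
      cosCoef a b (fmod a b f h) (fun j => (m j : ℤ)) *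
        Real.sqrt 2 ^ zcount (fun j => ((m j : ℤ))) *
        ∏ j, Real.cos (π * (m j : ℝ) * (y j - a j) / (b j - a j)) from rfl]
  exact hfib.tsum_eq.symm

end
end

section
/- Let s ≥ 1, D = ∏_{j=1}^s [a_j, b_j] with a_j < b_j, μ a Borel probability measure on ℝ^s with ∑_{k ∈ ℤ^s} |m_μ(k)| < ∞, let f : ℝ^s → ℝ be measurable and bounded on D with ∑_{k ∈ ℕ^s} 2^{|k|_0/2} |f̃_cos(k)| < ∞, let N ≥ 2, g ∈ {1,…,N−1}^s, and L⊥ = {h ∈ ℤ^s : h·g ≡ 0 (mod N)}. Assume the double series ∑_{h ∈ L⊥\{0}} ∑_{k ∈ ℤ^s} (√2)^{−|h−k|_0} |f̃_cos(h−k)| |m_μ(k)| converges. Then ∑_{h ∈ L⊥\{0}} ∑_{k ∈ ℤ^s} (√2)^{−|h−k|_0} f̃_cos(h−k) m_μ(k) = ∑_{h ∈ L⊥\{0}} ∫_{ℝ^s} f̄_h(y) μ(dy), where f_h(y) := f(y) ∏_{j=1}^s cos(π h_j (y_j − a_j)/(b_j − a_j)) and f̄_h denotes the half-period cosine expansion of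 f_h. That is, the lattice-rule quadrature error equals the sum over the nonzero dual-lattice points of the integrals of the half-period cosine expansions of the modulated functions f_h against μ. -/
open MeasureTheory Real Finset

noncomputable section

namespace S11
open Finset

variable {s : ℕ}

def bsgn (σ : Bool) : ℤ := if σ then 1 else -1

def Psi (n : Fin s → ℕ) (σ : Fin s → Bool) : Fin s → ℤ := fun j => bsgn (σ j) * n j

/-- nonzero count of an ℕ-vector -/
def zc (n : Fin s → ℕ) : ℕ := (Finset.univ.filter fun j => n j ≠ 0).card

lemma zc_le (n : Fin s → ℕ) : zc n ≤ s := by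
  classical
  simpa [zc] using (Finset.card_filter_le Finset.univ fun j => n j ≠ 0)

lemma zcount_cast (n : Fin s → ℕ) : zcount (fun j => (n j : ℤ)) = zc n := by
  unfold zcount zc
  congr 1
  apply Finset.filter_congr
  intro j _
  simp

lemma zcount_psi (n : Fin s → ℕ) (σ : Fin s → Bool) : zcount (Psi n σ) = zc n := by
  unfold zcount zc
  congr 1
  apply Finset.filter_congr
  intro j _
  cases h : σ j <;> simp [Psi, bsgn, h]

def Sn (n : Fin s → ℕ) : Type := {σ : Fin s → Bool // ∀ j, n j = 0 → σ j = true}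

instance (n : Fin s → ℕ) : Fintype (Sn n) := by unfold Sn; infer_instance

/-- Full sign space splits as `Sn n × (zeros → Bool)`. -/
def fullEquiv (n : Fin s → ℕ) : (Fin s → Bool) ≃ (Sn n × ({j : Fin s // n j = 0} → Bool)) where
  toFun σ := (⟨fun j => if n j = 0 then true else σ j, fun j h => by simp [h]⟩, fun j => σ j.1)
  invFun p := fun j => if h : n j = 0 then p.2 ⟨j, h⟩ else p.1.1 j
  left_inv σ := by
    funext j
    by_cases h : n j = 0 <;> simp [h]
  right_inv p := by
    refine Prod.ext ?_ ?_
    · apply Subtype.ext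
      funext j
      by_cases h : n j = 0 <;> simp [h]
      exact p.1.2 j h
    · funext j
      simp [j.2]

lemma psi_fullEquiv_symm (n : Fin s → ℕ) (p : Sn n × ({j : Fin s // n j = 0} → Bool)) :
    Psi n ((fullEquiv n).symm p) = Psi n p.1.1 := by
  funext j
  by_cases h : n j = 0
  · simp [Psi, h]
  · simp [Psi, fullEquiv, h]

lemma card_zero_bool (n : Fin s → ℕ) :
    Fintype.card ({j : Fin s // n j = 0} → Bool) = 2 ^ (s - zc n) := by
  classical
  rw [Fintype.card_fun, Fintype.card_bool, Fintype.card_subtype]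
  congr 1
  have h := Finset.card_filter_add_card_filter_not (s := (Finset.univ : Finset (Fin s)))
    (p := fun j => n j = 0)
  simp only [Finset.card_univ, Fintype.card_fin] at h
  unfold zc
  simp only [ne_eq] at *
  omega

lemma card_Sn (n : Fin s → ℕ) : Fintype.card (Sn n) = 2 ^ zc n := by
  classical
  have hc : Fintype.card (Fin s → Bool) =
      Fintype.card (Sn n) * Fintype.card ({j : Fin s // n j = 0} → Bool) := by
    rw [← Fintype.card_prod]
    exact Fintype.card_congr (fullEquiv n)
  rw [Fintype.card_fun, Fintype.card_bool, Fintype.card_fin, card_zero_bool] at hc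
  have hle := zc_le (n := n)
  have h2 : (2:ℕ) ^ s = 2 ^ (zc n) * 2 ^ (s - zc n) := by
    rw [← pow_add]
    congr 1
    omega
  have hpos : 0 < (2:ℕ) ^ (s - zc n) := pow_pos (by norm_num) _
  nlinarith [hc, h2, hpos]

/-- F1: the full sign sum equals `2 ^ (s - zc n)` times the reduced sign sum. -/
lemma sum_bool_eq (n : Fin s → ℕ) (G : (Fin s → ℤ) → ℝ) :
    ∑ σ : Fin s → Bool, G (Psi n σ) =
      2 ^ (s - zc n) * ∑ τ : Sn n, G (Psi n τ.1) := by
  classical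
  rw [← Equiv.sum_comp (fullEquiv n).symm (fun σ => G (Psi n σ))]
  have : ∀ p : Sn n × ({j : Fin s // n j = 0} → Bool),
      G (Psi n ((fullEquiv n).symm p)) = G (Psi n p.1.1) := fun p => by
    rw [psi_fullEquiv_symm]
  rw [Finset.sum_congr rfl (fun p _ => this p)]
  rw [Fintype.sum_prod_type]
  simp only [Finset.sum_const, Finset.card_univ, nsmul_eq_mul]
  rw [← Finset.mul_sum, card_zero_bool]
  push_cast
  ring

/-- The master equivalence `Σ n, Sn n ≃ ℤ^s`. -/
def sigEquiv : (Σ n : Fin s → ℕ, Sn n) ≃ (Fin s → ℤ) := by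
  apply Equiv.ofBijective (fun p => Psi p.1 p.2.1)
  constructor
  · rintro ⟨n, σ, hσ⟩ ⟨n', σ', hσ'⟩ h
    simp only at h
    have hn : n = n' := by
      funext j
      have := congrFun h j
      simp only [Psi, bsgn] at this
      cases hs1 : σ j <;> cases hs2 : σ' j <;> rw [hs1, hs2] at this <;> simp at this <;> omega
    subst hn
    have hσe : σ = σ' := by
      funext j
      have := congrFun h j
      simp only [Psi, bsgn] at this
      by_cases hz : n j = 0
      · rw [hσ j hz, hσ' j hz]
      · cases hs1 : σ j <;> cases hs2 : σ' j <;> rw [hs1, hs2] at this <;> simp at this <;> omega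
    subst hσe
    rfl
  · intro k
    refine ⟨⟨fun j => (k j).natAbs, ⟨fun j => decide (0 ≤ k j), fun j h => by
      simp only at h
      have : k j = 0 := by omega
      simp [this]⟩⟩, ?_⟩
    funext j
    simp only [Psi, bsgn]
    by_cases h : 0 ≤ k j
    · simp only [decide_eq_true h, if_true]
      omega
    · simp only [decide_eq_false h, Bool.false_eq_true, if_false]
      omega

/-- Fiberwise tsum identity over the master equivalence. -/
lemma fiber_tsum (K : (Fin s → ℤ) → ℝ) (hK : Summable K) :
    Summable (fun n : Fin s → ℕ => ∑ τ : Sn n, K (Psi n τ.1)) ∧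
      (∑' n : Fin s → ℕ, ∑ τ : Sn n, K (Psi n τ.1)) = ∑' k, K k := by
  have hsig : Summable (fun p : Σ n : Fin s → ℕ, Sn n => K (Psi p.1 p.2.1)) :=
    (Equiv.summable_iff (sigEquiv (s := s)) (f := K)).2 hK
  have hfib : ∀ n : Fin s → ℕ, Summable (fun τ : Sn n => K (Psi n τ.1)) :=
    fun n => (hasSum_fintype (fun τ : Sn n => K (Psi n τ.1))).summable
  constructor
  · have := hsig.sigma' hfib
    refine this.congr fun n => ?_
    exact tsum_fintype _
  · have h1 : ∑' p : (Σ n : Fin s → ℕ, Sn n), K (Psi p.1 p.2.1) = ∑' k, K k :=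
      Equiv.tsum_eq (sigEquiv (s := s)) K
    rw [← h1, Summable.tsum_sigma' hfib hsig]
    exact tsum_congr fun n => (tsum_fintype (fun τ : Sn n => K (Psi n τ.1))).symm

lemma prod_sum_bool (u v : Fin s → ℝ) :
    ∏ j, (u j + v j) = ∑ σ : Fin s → Bool, ∏ j, (if σ j then u j else v j) := by
  classical
  rw [Finset.prod_add]
  refine Finset.sum_nbij' (fun t => fun j => decide (j ∈ t))
    (fun σ => Finset.univ.filter (fun j => σ j = true)) ?_ ?_ ?_ ?_ ?_
  · intro t _; exact Finset.mem_univ _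
  · intro σ _; exact Finset.mem_powerset.2 (Finset.subset_univ _)
  · intro t _
    ext j
    simp
  · intro σ _
    funext j
    simp
  · intro t _
    have h1 : ∀ j, (if decide (j ∈ t) = true then u j else v j) = if j ∈ t then u j else v j := by
      intro j; simp
    rw [Finset.prod_congr rfl (fun j _ => h1 j), Finset.prod_ite]
    congr 1
    · congr 1
      ext j
      simp
    · congr 1
      ext j
      simp

lemma cosmul (A B : ℝ) : Real.cos A * Real.cos B = (Real.cos (A - B) + Real.cos (A + B)) / 2 := by
  rw [Real.cos_sub, Real.cos_add]; ring

lemma cos_cast_psi (n : Fin s → ℕ) (σ : Fin s → Bool) (j : Fin s) (x : ℝ) :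
    Real.cos (π * ((Psi n σ j : ℤ) : ℝ) * x) = Real.cos (π * (n j : ℝ) * x) := by
  cases h : σ j <;> simp only [Psi, bsgn, h, if_true, if_false, Bool.false_eq_true]
  · push_cast
    rw [show π * (-1 * (n j : ℝ)) * x = -(π * (n j : ℝ) * x) by ring, Real.cos_neg]
  · push_cast
    ring_nf

lemma cos_prod_expand (h : Fin s → ℤ) (n : Fin s → ℕ) (y : Fin s → ℝ) :
    (∏ j, Real.cos (π * (h j : ℝ) * y j)) * ∏ j, Real.cos (π * (n j : ℝ) * y j)
      = (2 ^ s : ℝ)⁻¹ *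
        ∑ σ : Fin s → Bool, ∏ j, Real.cos (π * (((h - Psi n σ) j : ℤ) : ℝ) * y j) := by
  rw [← Finset.prod_mul_distrib]
  have step1 : ∀ j : Fin s, Real.cos (π * (h j : ℝ) * y j) * Real.cos (π * (n j : ℝ) * y j)
      = (Real.cos (π * (((h j - (n j : ℤ)) : ℤ) : ℝ) * y j)
          + Real.cos (π * (((h j + (n j : ℤ)) : ℤ) : ℝ) * y j)) * (2:ℝ)⁻¹ := by
    intro j
    rw [cosmul (π * (h j : ℝ) * y j) (π * (n j : ℝ) * y j)]
    rw [show π * (h j : ℝ) * y j - π * (n j : ℝ) * y j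
        = π * (((h j - (n j : ℤ)) : ℤ) : ℝ) * y j by push_cast; ring]
    rw [show π * (h j : ℝ) * y j + π * (n j : ℝ) * y j
        = π * (((h j + (n j : ℤ)) : ℤ) : ℝ) * y j by push_cast; ring]
    ring
  rw [Finset.prod_congr rfl (fun j _ => step1 j), Finset.prod_mul_distrib,
    Finset.prod_const, prod_sum_bool]
  rw [Finset.card_univ, Fintype.card_fin, ← inv_pow, mul_comm]
  congr 1
  apply Finset.sum_congr rfl
  intro σ _
  apply Finset.prod_congr rfl
  intro j _
  cases hσ : σ j <;>
    simp only [hσ, if_true, if_false, Bool.false_eq_true, Pi.sub_apply, Psi, bsgn]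
  · norm_num
  · norm_num

section Analytic

variable (a b : Fin s → ℝ) (f : (Fin s → ℝ) → ℝ)
variable (μ : MeasureTheory.Measure (Fin s → ℝ))

lemma sqrt2_pow_pos (z : ℕ) : (0:ℝ) < Real.sqrt 2 ^ z :=
  pow_pos (Real.sqrt_pos.2 (by norm_num)) z

lemma two_pow_factor (n : Fin s → ℕ) :
    (Real.sqrt 2 ^ zc n) * (Real.sqrt 2 ^ zc n) = (2:ℝ) ^ zc n := by
  rw [← mul_pow, Real.mul_self_sqrt (by norm_num)]

/-- The raw integral appearing in `cosCoef`. -/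
def Ic (m : Fin s → ℤ) : ℝ :=
  ∫ y in Set.Icc (0 : Fin s → ℝ) 1,
    f (fun j => y j * (b j - a j) + a j) * ∏ j, Real.cos (π * (m j : ℝ) * y j)

lemma Ic_eq (m : Fin s → ℤ) :
    Ic a b f m = (Real.sqrt 2 ^ zcount m)⁻¹ * cosCoef a b f m := by
  unfold cosCoef Ic
  rw [← mul_assoc, inv_mul_cancel₀ (sqrt2_pow_pos _).ne', one_mul]

lemma micc : MeasurableSet (Set.Icc (0 : Fin s → ℝ) 1) := by
  rw [← Set.pi_univ_Icc]
  exact MeasurableSet.pi Set.countable_univ fun j _ => measurableSet_Icc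

lemma phi_measurable :
    Measurable (fun y : Fin s → ℝ => fun j => y j * (b j - a j) + a j) :=
  measurable_pi_lambda _ fun j => ((measurable_pi_apply j).mul_const _).add_const _

lemma cosprod_measurable (m : Fin s → ℤ) :
    Measurable (fun y : Fin s → ℝ => ∏ j, Real.cos (π * (m j : ℝ) * y j)) :=
  Finset.measurable_prod _ fun j _ =>
    Real.continuous_cos.measurable.comp ((measurable_pi_apply j).const_mul _)

instance : MeasureTheory.IsFiniteMeasure
    (MeasureTheory.volume.restrict (Set.Icc (0 : Fin s → ℝ) 1)) := by
  constructor
  rw [MeasureTheory.Measure.restrict_apply_univ, Real.volume_Icc_pi]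
  exact ENNReal.prod_lt_top fun j _ => ENNReal.ofReal_lt_top

variable {a b f}

lemma integrable_piece (hab : ∀ j, a j < b j) (hf : Measurable f)
    (hbdd : ∃ M : ℝ, ∀ y ∈ Set.Icc a b, |f y| ≤ M) (m : Fin s → ℤ) :
    MeasureTheory.Integrable
      (fun y : Fin s → ℝ => f (fun j => y j * (b j - a j) + a j) *
        ∏ j, Real.cos (π * (m j : ℝ) * y j))
      (MeasureTheory.volume.restrict (Set.Icc (0 : Fin s → ℝ) 1)) := by
  obtain ⟨M, hM⟩ := hbdd
  have hM0 : 0 ≤ M := le_trans (abs_nonneg _) (hM a ⟨le_rfl, fun j => (hab j).le⟩)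
  apply MeasureTheory.Integrable.mono' (MeasureTheory.integrable_const M)
  · exact ((hf.comp (phi_measurable a b)).mul (cosprod_measurable m)).aestronglyMeasurable
  · rw [MeasureTheory.ae_restrict_iff' (micc)]
    filter_upwards with y hy
    have hmem : (fun j => y j * (b j - a j) + a j) ∈ Set.Icc a b := by
      constructor
      · intro j
        show a j ≤ y j * (b j - a j) + a j
        have h0 : (0:ℝ) ≤ y j := hy.1 j
        nlinarith [hab j]
      · intro j
        show y j * (b j - a j) + a j ≤ b j
        have h1 : y j ≤ 1 := hy.2 j
        have h0 : (0:ℝ) ≤ y j := hy.1 j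
        nlinarith [hab j]
    have hprod : |∏ j, Real.cos (π * (m j : ℝ) * y j)| ≤ 1 := by
      rw [Finset.abs_prod]
      exact Finset.prod_le_one (fun j _ => abs_nonneg _) (fun j _ => Real.abs_cos_le_one _)
    rw [Real.norm_eq_abs, abs_mul]
    calc |f _| * |∏ j, Real.cos (π * (m j : ℝ) * y j)| ≤ M * 1 :=
          mul_le_mul (hM _ hmem) hprod (abs_nonneg _) hM0
      _ = M := mul_one M

/-- Coefficient formula for the modulated function. -/
lemma coefFmod (hab : ∀ j, a j < b j) (hf : Measurable f)
    (hbdd : ∃ M : ℝ, ∀ y ∈ Set.Icc a b, |f y| ≤ M) (h : Fin s → ℤ) (n : Fin s → ℕ) :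
    cosCoef a b (fmod a b f h) (fun j => (n j : ℤ))
      = Real.sqrt 2 ^ zc n * ((2 ^ s : ℝ)⁻¹ *
          ∑ σ : Fin s → Bool,
            (Real.sqrt 2 ^ zcount (h - Psi n σ))⁻¹ * cosCoef a b f (h - Psi n σ)) := by
  unfold cosCoef
  rw [zcount_cast]
  congr 1
  have hbody : ∀ y : Fin s → ℝ,
      fmod a b f h (fun j => y j * (b j - a j) + a j) *
          ∏ j, Real.cos (π * ((n j : ℤ) : ℝ) * y j)
        = (2 ^ s : ℝ)⁻¹ * ∑ σ : Fin s → Bool,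
            f (fun j => y j * (b j - a j) + a j) *
              ∏ j, Real.cos (π * (((h - Psi n σ) j : ℤ) : ℝ) * y j) := by
    intro y
    unfold fmod
    have harg : ∀ j : Fin s,
        Real.cos (π * (h j : ℝ) * ((fun j => y j * (b j - a j) + a j) j - a j) / (b j - a j))
          = Real.cos (π * (h j : ℝ) * y j) := by
      intro j
      have hne : b j - a j ≠ 0 := sub_ne_zero.2 (hab j).ne'
      congr 1
      field_simp
      ring
    rw [Finset.prod_congr rfl (fun j _ => harg j)]
    have hcast : ∀ j : Fin s, Real.cos (π * ((n j : ℤ) : ℝ) * y j)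
        = Real.cos (π * (n j : ℝ) * y j) := by intro j; push_cast; ring_nf
    rw [Finset.prod_congr rfl (fun j _ => hcast j)]
    rw [mul_assoc, cos_prod_expand h n y]
    simp only [Finset.mul_sum]
    apply Finset.sum_congr rfl
    intro σ _
    ring
  rw [MeasureTheory.integral_congr_ae (Filter.Eventually.of_forall hbody)]
  rw [MeasureTheory.integral_const_mul]
  rw [MeasureTheory.integral_finset_sum _
    (fun σ _ => integrable_piece hab hf hbdd (h - Psi n σ))]
  congr 1
  apply Finset.sum_congr rfl
  intro σ _
  rw [← mul_assoc, inv_mul_cancel₀ (sqrt2_pow_pos _).ne', one_mul]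

end Analytic


section Analytic2
open MeasureTheory

variable {s : ℕ} (a b : Fin s → ℝ) (f : (Fin s → ℝ) → ℝ)
variable (μ : Measure (Fin s → ℝ)) [IsProbabilityMeasure μ]

lemma cosCoef_psi (n : Fin s → ℕ) (σ : Fin s → Bool) :
    cosCoef a b f (Psi n σ) = cosCoef a b f (fun j => (n j : ℤ)) := by
  unfold cosCoef
  rw [zcount_psi, zcount_cast]
  congr 1
  apply MeasureTheory.integral_congr_ae
  apply Filter.Eventually.of_forall
  intro y
  exact congrArg (fun t => (f fun j => y j * (b j - a j) + a j) * t)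
    (Finset.prod_congr rfl fun j _ => cos_cast_psi n σ j (y j))

lemma cosTransform_psi (n : Fin s → ℕ) (σ : Fin s → Bool) :
    cosTransform a b μ (Psi n σ) = cosTransform a b μ (fun j => (n j : ℤ)) := by
  unfold cosTransform
  apply MeasureTheory.integral_congr_ae
  apply Filter.Eventually.of_forall
  intro y
  apply Finset.prod_congr rfl
  intro j _
  rw [mul_div_assoc, mul_div_assoc]
  exact cos_cast_psi n σ j ((y j - a j) / (b j - a j))

lemma cosTransform_abs_le (k : Fin s → ℤ) : |cosTransform a b μ k| ≤ 1 := by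
  unfold cosTransform
  rw [← Real.norm_eq_abs]
  have hb : ∀ᵐ y ∂μ, ‖∏ j, Real.cos (π * (k j : ℝ) * (y j - a j) / (b j - a j))‖ ≤ 1 := by
    apply Filter.Eventually.of_forall
    intro y
    rw [Real.norm_eq_abs, Finset.abs_prod]
    exact Finset.prod_le_one (fun j _ => abs_nonneg _) (fun j _ => Real.abs_cos_le_one _)
  calc ‖∫ y, ∏ j, Real.cos (π * (k j : ℝ) * (y j - a j) / (b j - a j)) ∂μ‖
      ≤ 1 * (μ Set.univ).toReal := norm_integral_le_of_norm_le_const hb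
    _ = 1 := by simp

variable {a b f}

lemma sumA (habs : Summable fun k : Fin s → ℕ =>
      Real.sqrt 2 ^ zcount (fun j => ((k j : ℤ))) * |cosCoef a b f (fun j => (k j : ℤ))|) :
    Summable (fun m : Fin s → ℤ => (Real.sqrt 2 ^ zcount m)⁻¹ * |cosCoef a b f m|) := by
  rw [← Equiv.summable_iff (sigEquiv (s := s))]
  have hKψ : ∀ p : Σ n : Fin s → ℕ, Sn n,
      ((fun m : Fin s → ℤ => (Real.sqrt 2 ^ zcount m)⁻¹ * |cosCoef a b f m|) ∘ sigEquiv) p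
        = (Real.sqrt 2 ^ zc p.1)⁻¹ * |cosCoef a b f (fun j => (p.1 j : ℤ))| := by
    intro p
    show (Real.sqrt 2 ^ zcount (Psi p.1 p.2.1))⁻¹ * |cosCoef a b f (Psi p.1 p.2.1)| = _
    rw [zcount_psi, cosCoef_psi]
  have hnn : ∀ p : Σ n : Fin s → ℕ, Sn n,
      0 ≤ ((fun m : Fin s → ℤ => (Real.sqrt 2 ^ zcount m)⁻¹ * |cosCoef a b f m|) ∘ sigEquiv) p :=
    fun p => mul_nonneg (inv_nonneg.2 (sqrt2_pow_pos _).le) (abs_nonneg _)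
  refine (summable_sigma_of_nonneg hnn).2 ⟨fun n => (hasSum_fintype _).summable, ?_⟩
  apply habs.congr
  intro n
  rw [tsum_fintype]
  have hconst : ∀ τ : Sn n,
      ((fun m : Fin s → ℤ => (Real.sqrt 2 ^ zcount m)⁻¹ * |cosCoef a b f m|) ∘ sigEquiv) ⟨n, τ⟩
        = (Real.sqrt 2 ^ zc n)⁻¹ * |cosCoef a b f (fun j => (n j : ℤ))| :=
    fun τ => hKψ ⟨n, τ⟩
  rw [Finset.sum_congr rfl (fun τ _ => hconst τ)]
  rw [Finset.sum_const, Finset.card_univ, card_Sn, nsmul_eq_mul]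
  push_cast
  rw [← two_pow_factor (s := s), zcount_cast]
  rw [mul_assoc (Real.sqrt 2 ^ zc n), ← mul_assoc (Real.sqrt 2 ^ zc n) ((Real.sqrt 2 ^ zc n)⁻¹),
    mul_inv_cancel₀ (sqrt2_pow_pos _).ne', one_mul]

lemma sumA_shift (habs : Summable fun k : Fin s → ℕ =>
      Real.sqrt 2 ^ zcount (fun j => ((k j : ℤ))) * |cosCoef a b f (fun j => (k j : ℤ))|)
    (h : Fin s → ℤ) :
    Summable (fun k : Fin s → ℤ =>
      (Real.sqrt 2 ^ zcount (h - k))⁻¹ * |cosCoef a b f (h - k)|) := by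
  have := (Equiv.subLeft h).summable_iff
    (f := fun m : Fin s → ℤ => (Real.sqrt 2 ^ zcount m)⁻¹ * |cosCoef a b f m|)
  exact (this.2 (sumA habs)).congr fun k => by simp [Equiv.subLeft]

/-- The summand of the dual-lattice series, for fixed `h`. -/
def Gfun (h k : Fin s → ℤ) : ℝ :=
  (Real.sqrt 2 ^ zcount (h - k))⁻¹ * cosCoef a b f (h - k) * cosTransform a b μ k

variable {μ}

lemma summable_G (habs : Summable fun k : Fin s → ℕ =>
      Real.sqrt 2 ^ zcount (fun j => ((k j : ℤ))) * |cosCoef a b f (fun j => (k j : ℤ))|)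
    (h : Fin s → ℤ) : Summable (Gfun (a := a) (b := b) (f := f) μ h) := by
  apply Summable.of_abs
  apply Summable.of_nonneg_of_le (fun k => abs_nonneg _) ?_ (sumA_shift habs h)
  intro k
  unfold Gfun
  rw [abs_mul, abs_mul, abs_of_nonneg (inv_nonneg.2 (sqrt2_pow_pos _).le)]
  apply mul_le_of_le_one_right
  · exact mul_nonneg (inv_nonneg.2 (sqrt2_pow_pos _).le) (abs_nonneg _)
  · exact cosTransform_abs_le a b μ k

lemma pow_cancel (n : Fin s → ℕ) :
    (2:ℝ) ^ zc n * ((2:ℝ) ^ s)⁻¹ * (2:ℝ) ^ (s - zc n) = 1 := by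
  have key : (2:ℝ) ^ zc n * (2:ℝ) ^ (s - zc n) = 2 ^ s := by
    rw [← pow_add]
    congr 1
    have := zc_le (n := n)
    omega
  rw [mul_right_comm, key, mul_inv_cancel₀ (by positivity)]

lemma coef_fiber_eq (hab : ∀ j, a j < b j) (hf : Measurable f)
    (hbdd : ∃ M : ℝ, ∀ y ∈ Set.Icc a b, |f y| ≤ M) (h : Fin s → ℤ) (n : Fin s → ℕ) :
    cosCoef a b (fmod a b f h) (fun j => (n j : ℤ)) * Real.sqrt 2 ^ zc n *
        cosTransform a b μ (fun j => (n j : ℤ))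
      = ∑ τ : Sn n, Gfun (a := a) (b := b) (f := f) μ h (Psi n τ.1) := by
  have hfull : ∑ σ : Fin s → Bool, Gfun (a := a) (b := b) (f := f) μ h (Psi n σ)
      = 2 ^ (s - zc n) * ∑ τ : Sn n, Gfun (a := a) (b := b) (f := f) μ h (Psi n τ.1) :=
    sum_bool_eq n _
  rw [coefFmod hab hf hbdd h n]
  have step : (∑ σ : Fin s → Bool,
        (Real.sqrt 2 ^ zcount (h - Psi n σ))⁻¹ * cosCoef a b f (h - Psi n σ)) *
          cosTransform a b μ (fun j => (n j : ℤ))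
      = ∑ σ : Fin s → Bool, Gfun (a := a) (b := b) (f := f) μ h (Psi n σ) := by
    rw [Finset.sum_mul]
    apply Finset.sum_congr rfl
    intro σ _
    unfold Gfun
    rw [cosTransform_psi]
  have expand : cosCoef a b (fmod a b f h) (fun j => (n j : ℤ)) = Real.sqrt 2 ^ zc n *
      ((2 ^ s : ℝ)⁻¹ * ∑ σ : Fin s → Bool,
        (Real.sqrt 2 ^ zcount (h - Psi n σ))⁻¹ * cosCoef a b f (h - Psi n σ)) :=
    coefFmod hab hf hbdd h n
  calc Real.sqrt 2 ^ zc n *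
        ((2 ^ s : ℝ)⁻¹ * ∑ σ : Fin s → Bool,
          (Real.sqrt 2 ^ zcount (h - Psi n σ))⁻¹ * cosCoef a b f (h - Psi n σ)) *
        Real.sqrt 2 ^ zc n * cosTransform a b μ (fun j => (n j : ℤ))
      = (2:ℝ) ^ zc n * ((2:ℝ) ^ s)⁻¹ *
          ((∑ σ : Fin s → Bool,
            (Real.sqrt 2 ^ zcount (h - Psi n σ))⁻¹ * cosCoef a b f (h - Psi n σ)) *
              cosTransform a b μ (fun j => (n j : ℤ))) := by
        rw [← two_pow_factor (s := s) n]
        ring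
    _ = (2:ℝ) ^ zc n * ((2:ℝ) ^ s)⁻¹ *
          (2 ^ (s - zc n) * ∑ τ : Sn n, Gfun (a := a) (b := b) (f := f) μ h (Psi n τ.1)) := by
        rw [step, hfull]
    _ = ∑ τ : Sn n, Gfun (a := a) (b := b) (f := f) μ h (Psi n τ.1) := by
        rw [← mul_assoc, pow_cancel, one_mul]

lemma measure_integrable (c : ℝ) (n : Fin s → ℕ) :
    Integrable (fun y : Fin s → ℝ =>
      c * ∏ j, Real.cos (π * (n j : ℝ) * (y j - a j) / (b j - a j))) μ := by
  apply MeasureTheory.Integrable.mono' (MeasureTheory.integrable_const |c|)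
  · apply Measurable.aestronglyMeasurable
    apply Measurable.const_mul
    apply Finset.measurable_prod
    intro j _
    exact Real.continuous_cos.measurable.comp (by fun_prop)
  · apply Filter.Eventually.of_forall
    intro y
    rw [Real.norm_eq_abs, abs_mul]
    apply mul_le_of_le_one_right (abs_nonneg _)
    rw [Finset.abs_prod]
    exact Finset.prod_le_one (fun j _ => abs_nonneg _) (fun j _ => Real.abs_cos_le_one _)

lemma cosTransform_cast (n : Fin s → ℕ) :
    cosTransform a b μ (fun j => (n j : ℤ))
      = ∫ y, ∏ j, Real.cos (π * (n j : ℝ) * (y j - a j) / (b j - a j)) ∂μ := by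
  unfold cosTransform
  apply MeasureTheory.integral_congr_ae
  apply Filter.Eventually.of_forall
  intro y
  apply Finset.prod_congr rfl
  intro j _
  norm_num

lemma absCoef_bound (hab : ∀ j, a j < b j) (hf : Measurable f)
    (hbdd : ∃ M : ℝ, ∀ y ∈ Set.Icc a b, |f y| ≤ M) (h : Fin s → ℤ) (n : Fin s → ℕ) :
    |cosCoef a b (fmod a b f h) (fun j => (n j : ℤ))| * Real.sqrt 2 ^ zc n
      ≤ ∑ τ : Sn n,
          (Real.sqrt 2 ^ zcount (h - Psi n τ.1))⁻¹ * |cosCoef a b f (h - Psi n τ.1)| := by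
  have hfull : ∑ σ : Fin s → Bool,
        (Real.sqrt 2 ^ zcount (h - Psi n σ))⁻¹ * |cosCoef a b f (h - Psi n σ)|
      = 2 ^ (s - zc n) * ∑ τ : Sn n,
          (Real.sqrt 2 ^ zcount (h - Psi n τ.1))⁻¹ * |cosCoef a b f (h - Psi n τ.1)| :=
    sum_bool_eq n (fun m => (Real.sqrt 2 ^ zcount (h - m))⁻¹ * |cosCoef a b f (h - m)|)
  rw [coefFmod hab hf hbdd h n]
  rw [abs_mul, abs_of_nonneg (sqrt2_pow_pos (zc n)).le, abs_mul,
    abs_of_nonneg (inv_nonneg.2 (by positivity : (0:ℝ) ≤ (2:ℝ)^s))]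
  calc Real.sqrt 2 ^ zc n * (((2:ℝ) ^ s)⁻¹ *
        |∑ σ : Fin s → Bool,
          (Real.sqrt 2 ^ zcount (h - Psi n σ))⁻¹ * cosCoef a b f (h - Psi n σ)|) *
        Real.sqrt 2 ^ zc n
      ≤ Real.sqrt 2 ^ zc n * (((2:ℝ) ^ s)⁻¹ *
          ∑ σ : Fin s → Bool,
            (Real.sqrt 2 ^ zcount (h - Psi n σ))⁻¹ * |cosCoef a b f (h - Psi n σ)|) *
          Real.sqrt 2 ^ zc n := by
        have habs' : |∑ σ : Fin s → Bool,
              (Real.sqrt 2 ^ zcount (h - Psi n σ))⁻¹ * cosCoef a b f (h - Psi n σ)|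
            ≤ ∑ σ : Fin s → Bool,
              (Real.sqrt 2 ^ zcount (h - Psi n σ))⁻¹ * |cosCoef a b f (h - Psi n σ)| := by
          refine le_trans (Finset.abs_sum_le_sum_abs _ _) ?_
          apply Finset.sum_le_sum
          intro σ _
          rw [abs_mul, abs_of_nonneg (inv_nonneg.2 (sqrt2_pow_pos _).le)]
        have h1 : (0:ℝ) ≤ Real.sqrt 2 ^ zc n := (sqrt2_pow_pos _).le
        have h2 : (0:ℝ) ≤ ((2:ℝ) ^ s)⁻¹ := by positivity
        exact mul_le_mul_of_nonneg_right
          (mul_le_mul_of_nonneg_left (mul_le_mul_of_nonneg_left habs' h2) h1) h1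
    _ = (2:ℝ) ^ zc n * ((2:ℝ) ^ s)⁻¹ * ((2:ℝ) ^ (s - zc n) * ∑ τ : Sn n,
          (Real.sqrt 2 ^ zcount (h - Psi n τ.1))⁻¹ * |cosCoef a b f (h - Psi n τ.1)|) := by
        rw [← hfull, ← two_pow_factor (s := s) n]
        ring
    _ = ∑ τ : Sn n,
          (Real.sqrt 2 ^ zcount (h - Psi n τ.1))⁻¹ * |cosCoef a b f (h - Psi n τ.1)| := by
        rw [← mul_assoc, pow_cancel, one_mul]

lemma intFbar (hab : ∀ j, a j < b j) (hf : Measurable f)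
    (hbdd : ∃ M : ℝ, ∀ y ∈ Set.Icc a b, |f y| ≤ M)
    (habs : Summable fun k : Fin s → ℕ =>
      Real.sqrt 2 ^ zcount (fun j => ((k j : ℤ))) * |cosCoef a b f (fun j => (k j : ℤ))|)
    (h : Fin s → ℤ) :
    ∫ y, fbar a b (fmod a b f h) y ∂μ
      = ∑' n : Fin s → ℕ,
          cosCoef a b (fmod a b f h) (fun j => (n j : ℤ)) * Real.sqrt 2 ^ zc n *
            cosTransform a b μ (fun j => (n j : ℤ)) := by
  set F : (Fin s → ℕ) → (Fin s → ℝ) → ℝ := fun n y =>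
    cosCoef a b (fmod a b f h) (fun j => (n j : ℤ)) * Real.sqrt 2 ^ zc n *
      ∏ j, Real.cos (π * (n j : ℝ) * (y j - a j) / (b j - a j)) with hF
  have hint : ∀ n : Fin s → ℕ, Integrable (F n) μ := fun n => measure_integrable _ n
  have hbound : ∀ n : Fin s → ℕ, (∫ y, ‖F n y‖ ∂μ)
      ≤ |cosCoef a b (fmod a b f h) (fun j => (n j : ℤ))| * Real.sqrt 2 ^ zc n := by
    intro n
    have : ∀ y : Fin s → ℝ, ‖F n y‖
        ≤ |cosCoef a b (fmod a b f h) (fun j => (n j : ℤ))| * Real.sqrt 2 ^ zc n := by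
      intro y
      rw [hF]
      simp only [Real.norm_eq_abs, abs_mul]
      rw [abs_of_nonneg (sqrt2_pow_pos (zc n)).le]
      apply mul_le_of_le_one_right (by positivity)
      rw [Finset.abs_prod]
      exact Finset.prod_le_one (fun j _ => abs_nonneg _) (fun j _ => Real.abs_cos_le_one _)
    calc (∫ y, ‖F n y‖ ∂μ)
        ≤ ∫ _, |cosCoef a b (fmod a b f h) (fun j => (n j : ℤ))| * Real.sqrt 2 ^ zc n ∂μ :=
          MeasureTheory.integral_mono (hint n).norm (MeasureTheory.integrable_const _)
            (fun y => this y)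
      _ = _ := by rw [MeasureTheory.integral_const]; simp
  have hmaj : Summable (fun n : Fin s → ℕ =>
      |cosCoef a b (fmod a b f h) (fun j => (n j : ℤ))| * Real.sqrt 2 ^ zc n) := by
    apply Summable.of_nonneg_of_le
      (fun n => mul_nonneg (abs_nonneg _) (sqrt2_pow_pos _).le)
      (fun n => absCoef_bound hab hf hbdd h n)
    exact (fiber_tsum _ (sumA_shift habs h)).1
  have hFsum : Summable fun n : Fin s → ℕ => ∫ y, ‖F n y‖ ∂μ := by
    apply Summable.of_nonneg_of_le
      (fun n => MeasureTheory.integral_nonneg (fun y => norm_nonneg _)) hbound hmaj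
  have key := MeasureTheory.integral_tsum_of_summable_integral_norm hint hFsum
  have hfbar : ∀ y : Fin s → ℝ, fbar a b (fmod a b f h) y = ∑' n : Fin s → ℕ, F n y := by
    intro y
    unfold fbar
    apply tsum_congr
    intro n
    rw [hF, zcount_cast]
  rw [MeasureTheory.integral_congr_ae (Filter.Eventually.of_forall hfbar), ← key]
  apply tsum_congr
  intro n
  rw [hF]
  rw [MeasureTheory.integral_const_mul, cosTransform_cast]

lemma inner_eq (hab : ∀ j, a j < b j) (hf : Measurable f)
    (hbdd : ∃ M : ℝ, ∀ y ∈ Set.Icc a b, |f y| ≤ M)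
    (habs : Summable fun k : Fin s → ℕ =>
      Real.sqrt 2 ^ zcount (fun j => ((k j : ℤ))) * |cosCoef a b f (fun j => (k j : ℤ))|)
    (h : Fin s → ℤ) :
    ∑' k : Fin s → ℤ, Gfun (a := a) (b := b) (f := f) μ h k
      = ∫ y, fbar a b (fmod a b f h) y ∂μ := by
  rw [← (fiber_tsum _ (summable_G habs h)).2]
  rw [intFbar hab hf hbdd habs h]
  exact tsum_congr fun n => ((coef_fiber_eq hab hf hbdd h n).symm)

end Analytic2

end S11

/-- the lattice-rule quadrature error equals the sum over the nonzero
dual-lattice points of the integrals against `μ` of the half-period cosine expansions of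
the modulated functions `f_h`. -/
theorem stmt11 {s : ℕ} (hs : 1 ≤ s) (a b : Fin s → ℝ) (hab : ∀ j, a j < b j)
    (μ : Measure (Fin s → ℝ)) [IsProbabilityMeasure μ]
    (hm : Summable fun k : Fin s → ℤ => |cosTransform a b μ k|)
    (f : (Fin s → ℝ) → ℝ) (hf : Measurable f)
    (hbdd : ∃ M : ℝ, ∀ y ∈ Set.Icc a b, |f y| ≤ M)
    (habs : Summable fun k : Fin s → ℕ =>
      Real.sqrt 2 ^ zcount (fun j => ((k j : ℤ))) * |cosCoef a b f (fun j => (k j : ℤ))|)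
    (N : ℕ) (hN : 2 ≤ N) (g : Fin s → ℤ) (hg : ∀ j, 1 ≤ g j ∧ g j ≤ (N : ℤ) - 1)
    (L : Set (Fin s → ℤ)) (hL : L = {h | (∑ j, h j * g j) % (N : ℤ) = 0 ∧ h ≠ 0})
    (hsum : Summable (fun p : L × (Fin s → ℤ) =>
      Real.sqrt 2 ^ (-(zcount ((p.1 : Fin s → ℤ) - p.2) : ℤ)) *
        |cosCoef a b f ((p.1 : Fin s → ℤ) - p.2)| * |cosTransform a b μ p.2|)) :
    ∑' p : L × (Fin s → ℤ),
        Real.sqrt 2 ^ (-(zcount ((p.1 : Fin s → ℤ) - p.2) : ℤ)) *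
          cosCoef a b f ((p.1 : Fin s → ℤ) - p.2) * cosTransform a b μ p.2 =
      ∑' h : L, ∫ y, fbar a b (fmod a b f (h : Fin s → ℤ)) y ∂μ := by
  classical
  have hzpow : ∀ z : ℕ, (Real.sqrt 2 : ℝ) ^ (-(z : ℤ)) = ((Real.sqrt 2 : ℝ) ^ z)⁻¹ := by
    intro z
    rw [zpow_neg, zpow_natCast]
  set A : L × (Fin s → ℤ) → ℝ := fun p =>
    Real.sqrt 2 ^ (-(zcount ((p.1 : Fin s → ℤ) - p.2) : ℤ)) *
      cosCoef a b f ((p.1 : Fin s → ℤ) - p.2) * cosTransform a b μ p.2 with hA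
  have hAeq : ∀ p : L × (Fin s → ℤ),
      A p = S11.Gfun (a := a) (b := b) (f := f) μ (p.1 : Fin s → ℤ) p.2 := by
    intro p
    simp only [hA]
    unfold S11.Gfun
    rw [hzpow]
  have hSA : Summable A := by
    apply Summable.of_abs
    refine hsum.congr fun p => ?_
    simp only [hA]
    rw [abs_mul, abs_mul, abs_of_nonneg (zpow_nonneg (Real.sqrt_nonneg 2) _)]
  have hfib : ∀ h : L, Summable fun k : Fin s → ℤ => A (h, k) := fun h =>
    (S11.summable_G (μ := μ) habs (h : Fin s → ℤ)).congr fun k => (hAeq (h, k)).symm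
  rw [Summable.tsum_prod' hSA hfib]
  apply tsum_congr
  intro h
  calc ∑' k : Fin s → ℤ, A (h, k)
      = ∑' k : Fin s → ℤ, S11.Gfun (a := a) (b := b) (f := f) μ (h : Fin s → ℤ) k :=
        tsum_congr fun k => hAeq (h, k)
    _ = ∫ y, fbar a b (fmod a b f (h : Fin s → ℤ)) y ∂μ :=
        S11.inner_eq hab hf hbdd habs (h : Fin s → ℤ)

end
end
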